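/- arXiv:2001.01455 — 10 statements merged into one kernel-verified Lean document; each statement's English description precedes it below -/
import Mathlib

section
/- (Energy-Dissipation Principle.) Let E : ℝⁿ → ℝ be continuously differentiable, let R : ℝⁿ × ℝⁿ → [0,∞] be Borel measurable with v ↦ R(q,v) a dissipation potential for each q, and let R*(q,ξ) := sup_v (⟨ξ,v⟩ − R(q,v)). Let q : [0,T] → ℝⁿ be Lipschitz with a.e. derivative q̇, and assume t ↦ R(q(t), q̇(t)) and t ↦ R*(q(t), −∇E(q(t))) are Lebesgue measurable. Then the following are equivalent: (1) for almost every t ∈ [0,T], R(q(t), q̇(t)) + R*(q(t), −∇E(q(t))) = ⟨−∇E(q(t)), q̇(t)⟩; (2) E(q(T)) + ∫₀ᵀ [ R(q(t), q̇(t)) + R*(q(t), −∇E(q(t))) ] dt ≤ E(q(0)), where the integral is taken in [0,∞]. -/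
/-!
By the chain rule, `t ↦ -E (q t)` is absolutely continuous with derivative `⟪-∇E(q), q̇⟫`,
so the energy drop `E (q 0) - E (q T)` is the integral of `⟪-∇E(q), q̇⟫`. Fenchel–Young gives
`⟪-∇E(q), q̇⟫ ≤ R(q, q̇) + R*(q, -∇E(q))` pointwise, and an integrable function lying below a
measurable `[0,∞]`-valued one agrees with it a.e. exactly when the integrals are in the
reverse order.
-/

open Filter MeasureTheory
open scoped ENNReal NNReal RealInnerProductSpace Topology

/-- The partial Fenchel conjugate `R*(q,ξ) = sup_v (⟨ξ,v⟩ - R(q,v))` of a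
state-dependent dissipation potential, with values in `[0,∞]`. -/
noncomputable def dualDissipation {n : ℕ}
    (R : EuclideanSpace ℝ (Fin n) → EuclideanSpace ℝ (Fin n) → ℝ≥0∞)
    (q ξ : EuclideanSpace ℝ (Fin n)) : ℝ≥0∞ :=
  ⨆ v : EuclideanSpace ℝ (Fin n), ENNReal.ofReal ⟪ξ, v⟫ - R q v

theorem ofReal_inner_le_add_dualDissipation {n : ℕ}
    (R : EuclideanSpace ℝ (Fin n) → EuclideanSpace ℝ (Fin n) → ℝ≥0∞)
    (q ξ v : EuclideanSpace ℝ (Fin n)) :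
    ENNReal.ofReal ⟪ξ, v⟫ ≤ R q v + dualDissipation R q ξ :=
  tsub_le_iff_left.mp (le_iSup (fun v => ENNReal.ofReal ⟪ξ, v⟫ - R q v) v)

theorem EReal.coe_ennreal_eq_coe_iff {x : ℝ≥0∞} {y : ℝ} :
    (x : EReal) = y ↔ 0 ≤ y ∧ x = ENNReal.ofReal y := by
  constructor
  · intro h
    have hy : 0 ≤ y := EReal.coe_nonneg.mp (h ▸ EReal.coe_ennreal_nonneg x)
    refine ⟨hy, EReal.coe_ennreal_injective ?_⟩
    rw [h, EReal.coe_ennreal_ofReal, max_eq_left hy]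
  · rintro ⟨hy, rfl⟩
    rw [EReal.coe_ennreal_ofReal, max_eq_left hy]

theorem ae_coe_eq_iff_lintegral_le_integral {α : Type*} [MeasurableSpace α]
    {μ : Measure α} {f : α → ℝ} {g : α → ℝ≥0∞} (hf : Integrable f μ) (hg : AEMeasurable g μ)
    (hfg : ∀ᵐ x ∂μ, ENNReal.ofReal (f x) ≤ g x) :
    (∀ᵐ x ∂μ, (g x : EReal) = f x) ↔ ((∫⁻ x, g x ∂μ : ℝ≥0∞) : EReal) ≤ ∫ x, f x ∂μ := by
  constructor
  · intro h
    simp only [EReal.coe_ennreal_eq_coe_iff] at h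
    have hf_nonneg : 0 ≤ᵐ[μ] f := h.mono fun x hx => hx.1
    rw [lintegral_congr_ae (h.mono fun x hx => hx.2),
      ← ofReal_integral_eq_lintegral_ofReal hf hf_nonneg, EReal.coe_ennreal_ofReal,
      max_eq_left (integral_nonneg_of_ae hf_nonneg)]
  · intro h
    have hg_fin : ∫⁻ x, g x ∂μ ≠ ∞ := by
      rintro htop
      rw [htop, EReal.coe_ennreal_top, top_le_iff] at h
      exact EReal.coe_ne_top _ h
    have hg_lt_top : ∀ᵐ x ∂μ, g x < ∞ := ae_lt_top' hg hg_fin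
    have hg_int : Integrable (fun x => (g x).toReal) μ :=
      integrable_toReal_of_lintegral_ne_top hg hg_fin
    have hf_le : f ≤ᵐ[μ] fun x => (g x).toReal := by
      filter_upwards [hfg, hg_lt_top] with x hx hx_top
      exact (ENNReal.ofReal_le_iff_le_toReal hx_top.ne).mp hx
    have h_le : ∫ x, (g x).toReal ∂μ ≤ ∫ x, f x ∂μ := by
      rw [integral_toReal hg hg_lt_top, ← EReal.coe_le_coe_iff, EReal.coe_ennreal_toReal hg_fin]
      exact h
    have h_eq : f =ᵐ[μ] fun x => (g x).toReal :=
      (integral_eq_iff_of_ae_le hf hg_int hf_le).mp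
        (le_antisymm (integral_mono_ae hf hg_int hf_le) h_le)
    filter_upwards [h_eq, hg_lt_top] with x hx hx_top
    rw [hx, EReal.coe_ennreal_toReal hx_top.ne]

theorem ContDiff.absolutelyContinuousOnInterval_comp {E F : Type*}
    [NormedAddCommGroup E] [NormedSpace ℝ E] [NormedAddCommGroup F] [NormedSpace ℝ F]
    {Φ : E → F} (hΦ : ContDiff ℝ 1 Φ) {γ : ℝ → E} {K : ℝ≥0} {a b : ℝ}
    (hγ : LipschitzOnWith K γ (Set.uIcc a b)) :
    AbsolutelyContinuousOnInterval (fun t => Φ (γ t)) a b := by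
  obtain ⟨L, hL⟩ := hΦ.locallyLipschitz.locallyLipschitzOn.exists_lipschitzOnWith_of_compact
    (isCompact_uIcc.image_of_continuousOn hγ.continuousOn)
  exact (hL.comp hγ (Set.mapsTo_image γ _)).absolutelyContinuousOnInterval

namespace AbsolutelyContinuousOnInterval

variable {f f' : ℝ → ℝ} {a b : ℝ}

theorem integrableOn_Icc_of_ae_hasDerivAt (hab : a ≤ b)
    (hf : AbsolutelyContinuousOnInterval f a b)
    (hf' : ∀ᵐ t ∂volume.restrict (Set.Icc a b), HasDerivAt f (f' t) t) :
    IntegrableOn f' (Set.Icc a b) := by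
  refine IntegrableOn.congr_fun_ae ?_ (hf'.mono fun t ht => ht.deriv)
  rw [integrableOn_Icc_iff_integrableOn_Ioc]
  exact (intervalIntegrable_iff_integrableOn_Ioc_of_le hab).mp hf.intervalIntegrable_deriv

theorem setIntegral_Icc_eq_sub_of_ae_hasDerivAt (hab : a ≤ b)
    (hf : AbsolutelyContinuousOnInterval f a b)
    (hf' : ∀ᵐ t ∂volume.restrict (Set.Icc a b), HasDerivAt f (f' t) t) :
    ∫ t in Set.Icc a b, f' t = f b - f a := by
  rw [← integral_congr_ae (hf'.mono fun t ht => ht.deriv), integral_Icc_eq_integral_Ioc,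
    ← intervalIntegral.integral_of_le hab, hf.integral_deriv_eq_sub]

end AbsolutelyContinuousOnInterval

theorem statement2_general {n : ℕ} (E : EuclideanSpace ℝ (Fin n) → ℝ) (hE : ContDiff ℝ 1 E)
    (R : EuclideanSpace ℝ (Fin n) → EuclideanSpace ℝ (Fin n) → ℝ≥0∞)
    (T : ℝ) (hT : 0 < T) (q : ℝ → EuclideanSpace ℝ (Fin n)) (K : ℝ≥0)
    (hq : LipschitzOnWith K q (Set.Icc 0 T))
    (q' : ℝ → EuclideanSpace ℝ (Fin n))
    (hq' : ∀ᵐ t ∂(volume.restrict (Set.Icc (0:ℝ) T)), HasDerivAt q (q' t) t)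
    (hmeas1 : AEMeasurable (fun t => R (q t) (q' t)) (volume.restrict (Set.Icc (0:ℝ) T)))
    (hmeas2 : AEMeasurable (fun t => dualDissipation R (q t) (-gradient E (q t)))
      (volume.restrict (Set.Icc (0:ℝ) T))) :
    (∀ᵐ t ∂(volume.restrict (Set.Icc (0:ℝ) T)),
        (R (q t) (q' t) : EReal) + (dualDissipation R (q t) (-gradient E (q t)) : EReal) =
          ((⟪-gradient E (q t), q' t⟫ : ℝ) : EReal)) ↔
      (E (q T) : EReal) +
          (↑(∫⁻ t in Set.Icc (0:ℝ) T,
              (R (q t) (q' t) + dualDissipation R (q t) (-gradient E (q t)))) : EReal) ≤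
        (E (q 0) : EReal) := by
  have h_ac : AbsolutelyContinuousOnInterval (fun t => -E (q t)) 0 T :=
    hE.neg.absolutelyContinuousOnInterval_comp (Set.uIcc_of_le hT.le ▸ hq)
  have h_chain : ∀ᵐ t ∂(volume.restrict (Set.Icc (0:ℝ) T)),
      HasDerivAt (fun t => -E (q t)) ⟪-gradient E (q t), q' t⟫ t := by
    filter_upwards [hq'] with t ht
    rw [inner_neg_left, inner_gradient_left]
    exact ((hE.differentiable one_ne_zero (q t)).hasFDerivAt.comp_hasDerivAt t ht).neg
  have h_energy : ∫ t in Set.Icc 0 T, ⟪-gradient E (q t), q' t⟫ = E (q 0) - E (q T) := by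
    rw [h_ac.setIntegral_Icc_eq_sub_of_ae_hasDerivAt hT.le h_chain]
    ring
  simp_rw [← EReal.coe_ennreal_add]
  rw [add_comm, ← EReal.le_sub_iff_add_le (by simp) (by simp), ← EReal.coe_sub, ← h_energy]
  exact ae_coe_eq_iff_lintegral_le_integral (h_ac.integrableOn_Icc_of_ae_hasDerivAt hT.le h_chain)
    (hmeas1.add hmeas2) (ae_of_all _ fun t => ofReal_inner_le_add_dualDissipation R _ _ _)

/-- **Energy-Dissipation Principle.** For a `C¹` energy `E`, a Borel
measurable state-dependent dissipation potential `R`, and a Lipschitz curve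
`q : [0,T] → ℝⁿ` with a.e. derivative `q'`, the pointwise a.e. energy-dissipation
balance `R(q,q̇) + R*(q,-∇E(q)) = ⟨-∇E(q), q̇⟩` is equivalent to the integrated
energy-dissipation inequality `E(q(T)) + ∫₀ᵀ [R + R*] dt ≤ E(q(0))`. -/
theorem statement2 {n : ℕ} (E : EuclideanSpace ℝ (Fin n) → ℝ) (hE : ContDiff ℝ 1 E)
    (R : EuclideanSpace ℝ (Fin n) → EuclideanSpace ℝ (Fin n) → ℝ≥0∞)
    (hRmeas : Measurable (Function.uncurry R))
    (hRconv : ∀ q x y : EuclideanSpace ℝ (Fin n), ∀ t : ℝ, 0 ≤ t → t ≤ 1 →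
      R q (t • x + (1 - t) • y) ≤ ENNReal.ofReal t * R q x + ENNReal.ofReal (1 - t) * R q y)
    (hRlsc : ∀ q, LowerSemicontinuous (R q)) (hR0 : ∀ q, R q 0 = 0)
    (T : ℝ) (hT : 0 < T) (q : ℝ → EuclideanSpace ℝ (Fin n)) (K : ℝ≥0)
    (hq : LipschitzOnWith K q (Set.Icc 0 T))
    (q' : ℝ → EuclideanSpace ℝ (Fin n))
    (hq' : ∀ᵐ t ∂(volume.restrict (Set.Icc (0:ℝ) T)), HasDerivAt q (q' t) t)
    (hmeas1 : AEMeasurable (fun t => R (q t) (q' t)) (volume.restrict (Set.Icc (0:ℝ) T)))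
    (hmeas2 : AEMeasurable (fun t => dualDissipation R (q t) (-gradient E (q t)))
      (volume.restrict (Set.Icc (0:ℝ) T))) :
    (∀ᵐ t ∂(volume.restrict (Set.Icc (0:ℝ) T)),
        (R (q t) (q' t) : EReal) + (dualDissipation R (q t) (-gradient E (q t)) : EReal) =
          ((⟪-gradient E (q t), q' t⟫ : ℝ) : EReal)) ↔
      (E (q T) : EReal) +
          (↑(∫⁻ t in Set.Icc (0:ℝ) T,
              (R (q t) (q' t) + dualDissipation R (q t) (-gradient E (q t)))) : EReal) ≤
        (E (q 0) : EReal) :=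
  statement2_general E hE R T hT q K hq q' hq' hmeas1 hmeas2
end

section
/- Let N_k, N₀ : ℝⁿ × ℝⁿ × ℝⁿ → [0,∞] for a sequence ε_k → 0⁺, where N₀ is continuous and, for each (q,η), the map v ↦ N₀(q,v,η) is convex. Assume the scaling monotonicity N_k(q, λv, η) ≥ N_k(q, v, η) for all k, all λ ≥ 1 and all (q,v,η). Assume further that for every continuously differentiable F : ℝⁿ → ℝ and every T > 0 the following Γ-convergence holds with respect to uniform convergence of Lipschitz curves on [0,T]: (liminf) for every Lipschitz q : [0,T] → ℝⁿ and every sequence of Lipschitz curves q_k converging uniformly to q, liminf_k ∫₀ᵀ N_k(q_k(t), q̇_k(t), −∇F(q_k(t))) dt ≥ ∫₀ᵀ N₀(q(t), q̇(t), −∇F(q(t))) dt; (recovery) for every Lipschitz q : [0,T] → ℝⁿ there exist Lipschitz curves q_k converging uniformly to q with lim_k ∫₀ᵀ N_k(q_k(t), q̇_k(t), −∇F(q_k(t))) dt = ∫₀ᵀ N₀(q(t), q̇(t), −∇F(q(t))) dt. Then N₀(q, v, η) ≥ N₀(q, 0, η) for all (q, v, η) ∈ ℝⁿ × ℝⁿ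 × ℝⁿ. -/
/-!
Tilt by the linear function `F x = ⟪-η, x⟫`, so that `-∇F ≡ η`, and test the Γ-convergence on the
segment `s ↦ q + s • v`, `s ∈ [0, a]`. Running a recovery sequence of it at the slower speed
`a ≤ 1` (time `[0, 1]`) cannot increase the `N_k`-cost, by scaling monotonicity, while the slowed
curves converge to the slowed segment. The liminf inequality then gives
`∫₀¹ N₀(q + a t v, a v, η) dt ≤ ∫₀¹ N₀(q + a t v, v, η) dt`, and letting `a → 0⁺` continuity of
`N₀` yields `N₀(q, 0, η) ≤ N₀(q, v, η)`.
-/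

open Filter MeasureTheory
open scoped ENNReal NNReal RealInnerProductSpace Topology
open Set Function

theorem tendsto_lintegral_of_eventually_ae_mem {ι α : Type*} [MeasurableSpace α]
    {μ : Measure α} [IsProbabilityMeasure μ] {l : Filter ι} {g : ι → α → ℝ≥0∞} {b : ℝ≥0∞}
    (hg : ∀ U ∈ 𝓝 b, ∀ᶠ i in l, ∀ᵐ t ∂μ, g i t ∈ U) :
    Tendsto (fun i => ∫⁻ t, g i t ∂μ) l (𝓝 b) := by
  refine tendsto_order.2 ⟨fun c hcb => ?_, fun c hbc => ?_⟩
  · obtain ⟨c', hcc', hc'b⟩ := exists_between hcb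
    filter_upwards [hg _ (Ioi_mem_nhds hc'b)] with i hi
    calc c < c' := hcc'
      _ = ∫⁻ _, c' ∂μ := by simp
      _ ≤ ∫⁻ t, g i t ∂μ := lintegral_mono_ae (hi.mono fun _ ht => le_of_lt ht)
  · obtain ⟨c', hbc', hc'c⟩ := exists_between hbc
    filter_upwards [hg _ (Iio_mem_nhds hbc')] with i hi
    calc ∫⁻ t, g i t ∂μ ≤ ∫⁻ _, c' ∂μ := lintegral_mono_ae (hi.mono fun _ ht => le_of_lt ht)
      _ = c' := by simp
      _ < c := hc'c

theorem tendsto_setLIntegral_Icc_zero_one {X : Type*} [TopologicalSpace X]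
    {g : X → ℝ → ℝ≥0∞} (hg : Continuous (uncurry g)) {x₀ : X} {b : ℝ≥0∞}
    (hb : ∀ t ∈ Icc (0 : ℝ) 1, g x₀ t = b) :
    Tendsto (fun x => ∫⁻ t in Icc (0 : ℝ) 1, g x t) (𝓝 x₀) (𝓝 b) := by
  have : IsProbabilityMeasure (volume.restrict (Icc (0 : ℝ) 1)) := ⟨by simp⟩
  refine tendsto_lintegral_of_eventually_ae_mem fun U hU => ?_
  have hnear : ∀ᶠ x in 𝓝 x₀, ∀ t ∈ Icc (0 : ℝ) 1, g x t ∈ U :=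
    isCompact_Icc.eventually_forall_of_forall_eventually fun t ht =>
      hg.continuousAt.preimage_mem_nhds (by simpa [hb t ht] using hU)
  filter_upwards [hnear] with x hx
  exact (ae_restrict_mem measurableSet_Icc).mono hx

theorem setLIntegral_Icc_zero_one_comp_mul_left {a : ℝ} (ha : 0 < a) (g : ℝ → ℝ≥0∞) :
    ∫⁻ t in Icc (0 : ℝ) 1, g (a * t) = ENNReal.ofReal a⁻¹ * ∫⁻ s in Icc (0 : ℝ) a, g s := by
  have hderiv : ∀ t ∈ Icc (0 : ℝ) 1, HasDerivWithinAt (a * ·) a (Icc 0 1) t := fun t _ => by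
    simpa using ((hasDerivAt_id t).const_mul a).hasDerivWithinAt
  have himage : (a * ·) '' Icc (0 : ℝ) 1 = Icc 0 a := by
    rw [image_mul_left_Icc ha.le zero_le_one, mul_zero, mul_one]
  rw [← himage, lintegral_image_eq_lintegral_abs_deriv_mul measurableSet_Icc hderiv
    (mul_right_injective₀ ha.ne').injOn, lintegral_const_mul' _ _ ENNReal.ofReal_ne_top,
    ← mul_assoc, ← ENNReal.ofReal_mul (inv_nonneg.2 ha.le), abs_of_pos ha,
    inv_mul_cancel₀ ha.ne', ENNReal.ofReal_one, one_mul]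

theorem exists_lipschitzOnWith_comp_mul_left {E : Type*} [PseudoMetricSpace E] {f : ℝ → E}
    {a : ℝ} (ha : 0 ≤ a) (hf : ∃ K, LipschitzOnWith K f (Icc 0 a)) :
    ∃ K, LipschitzOnWith K (fun t => f (a * t)) (Icc 0 1) := by
  obtain ⟨K, hK⟩ := hf
  exact ⟨K * ‖a‖₊, hK.comp (lipschitzWith_smul a).lipschitzOnWith fun t ht =>
    ⟨mul_nonneg ha ht.1, mul_le_of_le_one_right ha ht.2⟩⟩

theorem gradient_inner_left {F : Type*} [NormedAddCommGroup F] [InnerProductSpace ℝ F]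
    [CompleteSpace F] (a x : F) : gradient (fun y => ⟪a, y⟫) x = a :=
  (hasGradientAt_iff_hasFDerivAt.2 (InnerProductSpace.toDual ℝ F a).hasFDerivAt).gradient

section GammaLimit

variable {E : Type*} [NormedAddCommGroup E] [NormedSpace ℝ E]

noncomputable def curveAction (L : E → E → ℝ≥0∞) (T : ℝ) (c : ℝ → E) : ℝ≥0∞ :=
  ∫⁻ t in Icc 0 T, L (c t) (deriv c t)

theorem setLIntegral_comp_mul_left_eq_curveAction (L : E → E → ℝ≥0∞) {a : ℝ}
    (ha : 0 < a) (c : ℝ → E) :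
    ∫⁻ t in Icc (0 : ℝ) 1, L (c (a * t)) (deriv c (a * t)) =
      ENNReal.ofReal a⁻¹ * curveAction L a c :=
  setLIntegral_Icc_zero_one_comp_mul_left ha fun s => L (c s) (deriv c s)

theorem curveAction_comp_mul_left (L : E → E → ℝ≥0∞) (a : ℝ) (c : ℝ → E) :
    curveAction L 1 (fun t => c (a * t)) =
      ∫⁻ t in Icc (0 : ℝ) 1, L (c (a * t)) (a • deriv c (a * t)) := by
  simp only [curveAction, deriv_comp_mul_left]

theorem setLIntegral_slowdown_le {M : ℕ → E → E → ℝ≥0∞} {M₀ : E → E → ℝ≥0∞}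
    (hscale : ∀ k x v (lam : ℝ), 1 ≤ lam → M k x v ≤ M k x (lam • v))
    (hliminf : ∀ c : ℝ → E, (∃ K, LipschitzOnWith K c (Icc 0 1)) →
      ∀ ck : ℕ → ℝ → E, (∀ k, ∃ K, LipschitzOnWith K (ck k) (Icc 0 1)) →
        TendstoUniformlyOn ck c atTop (Icc 0 1) →
        curveAction M₀ 1 c ≤ liminf (fun k => curveAction (M k) 1 (ck k)) atTop)
    {a : ℝ} (ha : 0 < a) (ha1 : a ≤ 1) {c : ℝ → E} (hc : ∃ K, LipschitzOnWith K c (Icc 0 a))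
    (hrec : ∃ ck : ℕ → ℝ → E, (∀ k, ∃ K, LipschitzOnWith K (ck k) (Icc 0 a)) ∧
      TendstoUniformlyOn ck c atTop (Icc 0 a) ∧
      Tendsto (fun k => curveAction (M k) a (ck k)) atTop (𝓝 (curveAction M₀ a c))) :
    ∫⁻ t in Icc (0 : ℝ) 1, M₀ (c (a * t)) (a • deriv c (a * t)) ≤
      ∫⁻ t in Icc (0 : ℝ) 1, M₀ (c (a * t)) (deriv c (a * t)) := by
  obtain ⟨ck, hckLip, hckUnif, hckTend⟩ := hrec
  have hslow : ∀ k x w, M k x (a • w) ≤ M k x w := fun k x w => by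
    simpa [smul_smul, inv_mul_cancel₀ ha.ne'] using
      hscale k x (a • w) a⁻¹ ((one_le_inv₀ ha).2 ha1)
  have hunif : TendstoUniformlyOn (fun k t => ck k (a * t)) (fun t => c (a * t)) atTop
      (Icc 0 1) :=
    (hckUnif.comp (a * ·)).mono fun t ht =>
      ⟨mul_nonneg ha.le ht.1, mul_le_of_le_one_right ha.le ht.2⟩
  have hlim := hliminf _ (exists_lipschitzOnWith_comp_mul_left ha.le hc) _
    (fun k => exists_lipschitzOnWith_comp_mul_left ha.le (hckLip k)) hunif
  rw [curveAction_comp_mul_left] at hlim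
  calc _ ≤ _ := hlim
    _ ≤ liminf (fun k => ENNReal.ofReal a⁻¹ * curveAction (M k) a (ck k)) atTop := by
      refine liminf_le_liminf (Eventually.of_forall fun k => ?_)
      rw [curveAction_comp_mul_left, ← setLIntegral_comp_mul_left_eq_curveAction _ ha]
      exact lintegral_mono fun t => hslow k _ _
    _ = ENNReal.ofReal a⁻¹ * curveAction M₀ a c :=
      (ENNReal.Tendsto.const_mul hckTend (Or.inr ENNReal.ofReal_ne_top)).liminf_eq
    _ = _ := (setLIntegral_comp_mul_left_eq_curveAction _ ha c).symm

end GammaLimit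

theorem statement4_general {n : ℕ}
    (N : ℕ → EuclideanSpace ℝ (Fin n) → EuclideanSpace ℝ (Fin n) →
      EuclideanSpace ℝ (Fin n) → ℝ≥0∞)
    (N0 : EuclideanSpace ℝ (Fin n) → EuclideanSpace ℝ (Fin n) →
      EuclideanSpace ℝ (Fin n) → ℝ≥0∞)
    (hN0cont : Continuous fun p : EuclideanSpace ℝ (Fin n) × EuclideanSpace ℝ (Fin n) ×
      EuclideanSpace ℝ (Fin n) => N0 p.1 p.2.1 p.2.2)
    -- scaling monotonicity:
    (hscale : ∀ (k : ℕ) (q v η : EuclideanSpace ℝ (Fin n)) (lam : ℝ), 1 ≤ lam →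
      N k q v η ≤ N k q (lam • v) η)
    -- Γ-liminf estimate, for every tilt `F` and every time horizon `T`:
    (hliminf : ∀ (F : EuclideanSpace ℝ (Fin n) → ℝ), ContDiff ℝ 1 F → ∀ T : ℝ, 0 < T →
      ∀ c : ℝ → EuclideanSpace ℝ (Fin n), (∃ K : ℝ≥0, LipschitzOnWith K c (Set.Icc 0 T)) →
      ∀ ck : ℕ → ℝ → EuclideanSpace ℝ (Fin n),
        (∀ k, ∃ K : ℝ≥0, LipschitzOnWith K (ck k) (Set.Icc 0 T)) →
        TendstoUniformlyOn ck c atTop (Set.Icc 0 T) →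
        (∫⁻ t in Set.Icc (0:ℝ) T, N0 (c t) (deriv c t) (-gradient F (c t))) ≤
          liminf (fun k =>
            ∫⁻ t in Set.Icc (0:ℝ) T, N k (ck k t) (deriv (ck k) t) (-gradient F (ck k t)))
            atTop)
    -- recovery sequences, for every tilt `F` and every time horizon `T`:
    (hrecovery : ∀ (F : EuclideanSpace ℝ (Fin n) → ℝ), ContDiff ℝ 1 F → ∀ T : ℝ, 0 < T →
      ∀ c : ℝ → EuclideanSpace ℝ (Fin n), (∃ K : ℝ≥0, LipschitzOnWith K c (Set.Icc 0 T)) →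
      ∃ ck : ℕ → ℝ → EuclideanSpace ℝ (Fin n),
        (∀ k, ∃ K : ℝ≥0, LipschitzOnWith K (ck k) (Set.Icc 0 T)) ∧
        TendstoUniformlyOn ck c atTop (Set.Icc 0 T) ∧
        Tendsto (fun k =>
            ∫⁻ t in Set.Icc (0:ℝ) T, N k (ck k t) (deriv (ck k) t) (-gradient F (ck k t)))
          atTop
          (𝓝 (∫⁻ t in Set.Icc (0:ℝ) T, N0 (c t) (deriv c t) (-gradient F (c t))))) :
    ∀ q v η : EuclideanSpace ℝ (Fin n), N0 q 0 η ≤ N0 q v η := by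
  intro q v η
  set F : EuclideanSpace ℝ (Fin n) → ℝ := fun y => ⟪-η, y⟫
  have hF : ContDiff ℝ 1 F := (innerSL ℝ (-η)).contDiff
  have hgradF : ∀ x, -gradient F x = η := fun x => by rw [gradient_inner_left, neg_neg]
  have hlim := hliminf F hF 1 one_pos
  have hrec := fun a ha => hrecovery F hF a ha (fun s => q + s • v)
  simp only [hgradF] at hlim hrec
  have hline : ∀ a, ∃ K, LipschitzOnWith K (fun s : ℝ => q + s • v) (Icc 0 a) := fun a =>
    ⟨_, ((LipschitzWith.const q).add
      (ContinuousLinearMap.toSpanSingleton ℝ v).lipschitz).lipschitzOnWith⟩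
  have hderiv : ∀ s : ℝ, deriv (fun s : ℝ => q + s • v) s = v := fun s =>
    (((hasDerivAt_id s).smul_const v).const_add q).deriv.trans (one_smul ℝ v)
  have hkey : ∀ᶠ a in 𝓝[>] 0, ∫⁻ t in Icc (0 : ℝ) 1, N0 (q + (a * t) • v) (a • v) η ≤
      ∫⁻ t in Icc (0 : ℝ) 1, N0 (q + (a * t) • v) v η := by
    filter_upwards [Ioc_mem_nhdsGT one_pos] with a ⟨ha, ha1⟩
    simpa only [hderiv] using setLIntegral_slowdown_le (M := fun k x w => N k x w η)
      (M₀ := fun x w => N0 x w η) (fun k x w => hscale k x w η) hlim ha ha1 (hline a)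
      (hrec a ha (hline a))
  have hcont : ∀ w : ℝ → EuclideanSpace ℝ (Fin n), Continuous w →
      Continuous (uncurry fun (a t : ℝ) => N0 (q + (a * t) • v) (w a) η) := fun w hw =>
    hN0cont.comp (f := fun p : ℝ × ℝ => (q + (p.1 * p.2) • v, w p.1, η)) (by fun_prop)
  refine le_of_tendsto_of_tendsto ?_ ?_ hkey
  · exact (tendsto_setLIntegral_Icc_zero_one (hcont (· • v) (by fun_prop)) (b := N0 q 0 η)
      fun t _ => by simp).mono_left nhdsWithin_le_nhds
  · exact (tendsto_setLIntegral_Icc_zero_one (hcont (fun _ => v) (by fun_prop))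
      (b := N0 q v η) fun t _ => by simp).mono_left nhdsWithin_le_nhds

/-- If the tilted dissipation functionals built from `N_k`
Γ-converge (with respect to uniform convergence of Lipschitz curves) to the functional
with continuous integrand `N₀` which is convex in the rate variable, and the `N_k`
satisfy the scaling monotonicity `N_k(q, λv, η) ≥ N_k(q, v, η)` for `λ ≥ 1`, then
`N₀(q, v, η) ≥ N₀(q, 0, η)` for all `(q, v, η)`. -/
theorem statement4 {n : ℕ}
    (ε : ℕ → ℝ) (hε : ∀ k, 0 < ε k) (hε0 : Tendsto ε atTop (𝓝 0))
    (N : ℕ → EuclideanSpace ℝ (Fin n) → EuclideanSpace ℝ (Fin n) →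
      EuclideanSpace ℝ (Fin n) → ℝ≥0∞)
    (N0 : EuclideanSpace ℝ (Fin n) → EuclideanSpace ℝ (Fin n) →
      EuclideanSpace ℝ (Fin n) → ℝ≥0∞)
    (hN0cont : Continuous fun p : EuclideanSpace ℝ (Fin n) × EuclideanSpace ℝ (Fin n) ×
      EuclideanSpace ℝ (Fin n) => N0 p.1 p.2.1 p.2.2)
    (hN0conv : ∀ q η x y : EuclideanSpace ℝ (Fin n), ∀ t : ℝ, 0 ≤ t → t ≤ 1 →
      N0 q (t • x + (1 - t) • y) η ≤
        ENNReal.ofReal t * N0 q x η + ENNReal.ofReal (1 - t) * N0 q y η)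
    -- scaling monotonicity:
    (hscale : ∀ (k : ℕ) (q v η : EuclideanSpace ℝ (Fin n)) (lam : ℝ), 1 ≤ lam →
      N k q v η ≤ N k q (lam • v) η)
    -- Γ-liminf estimate, for every tilt `F` and every time horizon `T`:
    (hliminf : ∀ (F : EuclideanSpace ℝ (Fin n) → ℝ), ContDiff ℝ 1 F → ∀ T : ℝ, 0 < T →
      ∀ c : ℝ → EuclideanSpace ℝ (Fin n), (∃ K : ℝ≥0, LipschitzOnWith K c (Set.Icc 0 T)) →
      ∀ ck : ℕ → ℝ → EuclideanSpace ℝ (Fin n),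
        (∀ k, ∃ K : ℝ≥0, LipschitzOnWith K (ck k) (Set.Icc 0 T)) →
        TendstoUniformlyOn ck c atTop (Set.Icc 0 T) →
        (∫⁻ t in Set.Icc (0:ℝ) T, N0 (c t) (deriv c t) (-gradient F (c t))) ≤
          liminf (fun k =>
            ∫⁻ t in Set.Icc (0:ℝ) T, N k (ck k t) (deriv (ck k) t) (-gradient F (ck k t)))
            atTop)
    -- recovery sequences, for every tilt `F` and every time horizon `T`:
    (hrecovery : ∀ (F : EuclideanSpace ℝ (Fin n) → ℝ), ContDiff ℝ 1 F → ∀ T : ℝ, 0 < T →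
      ∀ c : ℝ → EuclideanSpace ℝ (Fin n), (∃ K : ℝ≥0, LipschitzOnWith K c (Set.Icc 0 T)) →
      ∃ ck : ℕ → ℝ → EuclideanSpace ℝ (Fin n),
        (∀ k, ∃ K : ℝ≥0, LipschitzOnWith K (ck k) (Set.Icc 0 T)) ∧
        TendstoUniformlyOn ck c atTop (Set.Icc 0 T) ∧
        Tendsto (fun k =>
            ∫⁻ t in Set.Icc (0:ℝ) T, N k (ck k t) (deriv (ck k) t) (-gradient F (ck k t)))
          atTop
          (𝓝 (∫⁻ t in Set.Icc (0:ℝ) T, N0 (c t) (deriv c t) (-gradient F (c t))))) :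
    ∀ q v η : EuclideanSpace ℝ (Fin n), N0 q 0 η ≤ N0 q v η :=
  statement4_general N N0 hN0cont hscale hliminf hrecovery
end

section
/- (Construction of a force-dependent dissipation potential from a contact-equivalent one.) Let X be a finite-dimensional real inner product space and let M : X × X → ℝ ∪ {+∞} satisfy: (i) M(v,ξ) ≥ ⟨ξ,v⟩ for all (v,ξ); (ii) for each ξ the map v ↦ M(v,ξ) is convex and lower semicontinuous; (iii) M(v,ξ) ≥ M(0,ξ) for all (v,ξ); (iv) there exists a superlinear dissipation potential R : X → [0,∞] (i.e. R(v)/‖v‖ → ∞ as ‖v‖ → ∞) such that the contact set {(v,ξ) : M(v,ξ) = ⟨ξ,v⟩} equals the graph of the convex subdifferential ∂R. Then for each ξ ∈ X: M(0,ξ) is finite; the function R̄_ξ(v) := M(v,ξ) − M(0,ξ) is a dissipation potential; its Fenchel conjugate satisfies (R̄_ξ)*(ξ) = M(0,ξ); and M(v,ξ) = R̄_ξ(v) + (R̄_ξ)*(ξ) for all v ∈ X. -/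
open scoped ENNReal RealInnerProductSpace
open Filter Topology Bornology

/-!
Since `R` is superlinear and lower semicontinuous, `v ↦ R v - ⟪ξ, v⟫` attains its minimum at some
`v₀`, i.e. `ξ ∈ ∂R v₀`, and the contact condition gives `M v₀ ξ = ⟪ξ, v₀⟫`. Hence
`0 = ⟪ξ, 0⟫ ≤ M 0 ξ ≤ M v₀ ξ < ∞`, and `R̄ξ = M · ξ - M 0 ξ` inherits convexity and lower
semicontinuity from `M · ξ`. Its conjugate at `ξ` is `sup_w (⟪ξ, w⟫ - M w ξ) + M 0 ξ`: the lower
bound `M w ξ ≥ ⟪ξ, w⟫` makes it at most `M 0 ξ`, and `w = v₀` attains this value.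
-/

theorem LowerSemicontinuous.exists_forall_le_of_cocompact {α β : Type*} [TopologicalSpace α]
    [LinearOrder β] {f : α → β} (hf : LowerSemicontinuous f) (x₀ : α)
    (h : ∀ᶠ x in cocompact α, f x₀ ≤ f x) : ∃ x, ∀ y, f x ≤ f y := by
  obtain ⟨K, hK, hKc⟩ := mem_cocompact.1 h
  obtain ⟨a, -, ha⟩ := (hf.lowerSemicontinuousOn _).exists_isMinOn (Set.insert_nonempty x₀ K)
    (hK.insert x₀)
  refine ⟨a, fun y => ?_⟩
  by_cases hy : y ∈ K
  · exact ha (Set.mem_insert_of_mem x₀ hy)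
  · exact (ha (Set.mem_insert x₀ K)).trans (hKc hy)

theorem LowerSemicontinuous.tsub_const {α : Type*} [TopologicalSpace α] {f : α → ℝ≥0∞}
    (hf : LowerSemicontinuous f) (c : ℝ≥0∞) : LowerSemicontinuous fun x => f x - c :=
  (ENNReal.continuous_sub_right c).comp_lowerSemicontinuous hf fun _ _ h => tsub_le_tsub_right h c

theorem ENNReal.iSup_tsub_eq_of_le_add {ι : Type*} {f g : ι → ℝ≥0∞} {c : ℝ≥0∞}
    (hle : ∀ i, f i ≤ g i + c) (i₀ : ι) (heq : f i₀ = g i₀ + c) (hfin : g i₀ ≠ ⊤) :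
    ⨆ i, f i - g i = c :=
  le_antisymm (iSup_le fun i => tsub_le_iff_left.2 (hle i))
    (le_iSup_of_le i₀ (by rw [heq, ENNReal.add_sub_cancel_left hfin]))

theorem ENNReal.convex_tsub_const {X : Type*} [AddCommGroup X] [Module ℝ X] {f : X → ℝ≥0∞}
    {c : ℝ≥0∞} (hc : ∀ x, c ≤ f x)
    (hf : ∀ x y : X, ∀ t : ℝ, 0 ≤ t → t ≤ 1 →
      f (t • x + (1 - t) • y) ≤ ENNReal.ofReal t * f x + ENNReal.ofReal (1 - t) * f y)
    (x y : X) (t : ℝ) (ht₀ : 0 ≤ t) (ht₁ : t ≤ 1) :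
    f (t • x + (1 - t) • y) - c ≤
      ENNReal.ofReal t * (f x - c) + ENNReal.ofReal (1 - t) * (f y - c) := by
  have hsum : ENNReal.ofReal t + ENNReal.ofReal (1 - t) = 1 := by
    rw [← ENNReal.ofReal_add ht₀ (by linarith), add_sub_cancel, ENNReal.ofReal_one]
  rw [tsub_le_iff_right]
  calc f (t • x + (1 - t) • y)
      ≤ ENNReal.ofReal t * (f x - c + c) + ENNReal.ofReal (1 - t) * (f y - c + c) := by
        rw [tsub_add_cancel_of_le (hc x), tsub_add_cancel_of_le (hc y)]
        exact hf x y t ht₀ ht₁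
    _ = ENNReal.ofReal t * (f x - c) + ENNReal.ofReal (1 - t) * (f y - c) +
          (ENNReal.ofReal t + ENNReal.ofReal (1 - t)) * c := by ring
    _ = _ := by rw [hsum, one_mul]

theorem EReal.convex_toENNReal_comp {X : Type*} [AddCommGroup X] [Module ℝ X] {g : X → EReal}
    (hg₀ : ∀ x, 0 ≤ g x)
    (hg : ∀ x y : X, ∀ t : ℝ, 0 ≤ t → t ≤ 1 →
      g (t • x + (1 - t) • y) ≤ (t : EReal) * g x + ((1 - t : ℝ) : EReal) * g y)
    (x y : X) (t : ℝ) (ht₀ : 0 ≤ t) (ht₁ : t ≤ 1) :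
    (g (t • x + (1 - t) • y)).toENNReal ≤
      ENNReal.ofReal t * (g x).toENNReal + ENNReal.ofReal (1 - t) * (g y).toENNReal := by
  rw [← EReal.coe_ennreal_le_coe_ennreal_iff, EReal.coe_ennreal_add, EReal.coe_ennreal_mul,
    EReal.coe_ennreal_mul, EReal.coe_ennreal_ofReal, EReal.coe_ennreal_ofReal, max_eq_left ht₀,
    max_eq_left (_root_.sub_nonneg.2 ht₁), EReal.coe_toENNReal (hg₀ _), EReal.coe_toENNReal (hg₀ x),
    EReal.coe_toENNReal (hg₀ y)]
  exact hg x y t ht₀ ht₁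

section Superlinear

variable {X : Type*} [NormedAddCommGroup X] [InnerProductSpace ℝ X] {R : X → ℝ≥0∞}

theorem eventually_inner_lt_of_superlinear
    (hR : Tendsto (fun v : X => R v / ENNReal.ofReal ‖v‖) (comap norm atTop) (𝓝 ⊤)) (ξ : X) :
    ∀ᶠ v in cobounded X, ((⟪ξ, v⟫ : ℝ) : EReal) < R v := by
  rw [← comap_norm_atTop]
  filter_upwards [hR.eventually (lt_mem_nhds (ENNReal.ofReal_lt_top (r := ‖ξ‖)))] with v hv
  have hlt : ENNReal.ofReal (‖ξ‖ * ‖v‖) < R v := by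
    rw [ENNReal.ofReal_mul (norm_nonneg ξ)]
    exact ENNReal.mul_lt_of_lt_div hv
  calc ((⟪ξ, v⟫ : ℝ) : EReal) ≤ ((‖ξ‖ * ‖v‖ : ℝ) : EReal) :=
        EReal.coe_le_coe_iff.2 (real_inner_le_norm ξ v)
    _ ≤ (ENNReal.ofReal (‖ξ‖ * ‖v‖) : EReal) := by
        rw [EReal.coe_ennreal_ofReal]; exact_mod_cast le_max_left _ _
    _ < R v := EReal.coe_ennreal_lt_coe_ennreal_iff.2 hlt

theorem exists_subgradient_of_superlinear [FiniteDimensional ℝ X] (hR_lsc : LowerSemicontinuous R)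
    (hR0 : R 0 = 0)
    (hR : Tendsto (fun v : X => R v / ENNReal.ofReal ‖v‖) (comap norm atTop) (𝓝 ⊤)) (ξ : X) :
    ∃ v, R v ≠ ⊤ ∧ ∀ w : X, (R v : EReal) + ((⟪ξ, w - v⟫ : ℝ) : EReal) ≤ R w := by
  set g : X → EReal := fun v => (R v : EReal) - ((⟪ξ, v⟫ : ℝ) : EReal)
  have hg_lsc : LowerSemicontinuous g := by
    have hR_lsc' : LowerSemicontinuous fun v => (R v : EReal) :=
      continuous_coe_ennreal_ereal.comp_lowerSemicontinuous hR_lsc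
        fun _ _ h => EReal.coe_ennreal_le_coe_ennreal_iff.2 h
    have hinner : Continuous fun v => -((⟪ξ, v⟫ : ℝ) : EReal) :=
      continuous_neg.comp (continuous_coe_real_ereal.comp (continuous_const.inner continuous_id))
    simpa only [g, sub_eq_add_neg] using hR_lsc'.add' hinner.lowerSemicontinuous fun v =>
      EReal.continuousAt_add (Or.inr (by simp)) (Or.inr (by simp))
  have hg0 : g 0 = 0 := by simp [g, hR0]
  have hg_coercive : ∀ᶠ v in cocompact X, g 0 ≤ g v := by
    rw [← Metric.cobounded_eq_cocompact]
    filter_upwards [eventually_inner_lt_of_superlinear hR ξ] with v hv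
    rw [hg0]
    exact EReal.sub_nonneg (Or.inr (EReal.coe_ne_top _)) (Or.inr (EReal.coe_ne_bot _)) |>.2 hv.le
  obtain ⟨v, hv⟩ := hg_lsc.exists_forall_le_of_cocompact 0 hg_coercive
  have hRv : R v ≠ ⊤ := by
    intro htop
    have := hv 0
    simp [g, htop, hR0] at this
  refine ⟨v, hRv, fun w => ?_⟩
  obtain hRw | hRw := eq_or_ne (R w) ⊤
  · simp [hRw]
  have hvw := hv w
  simp only [g, ← EReal.coe_ennreal_toReal hRv, ← EReal.coe_ennreal_toReal hRw] at hvw ⊢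
  norm_cast at hvw ⊢
  rw [inner_sub_right]
  linarith

end Superlinear

theorem statement7_general {X : Type*} [NormedAddCommGroup X] [InnerProductSpace ℝ X]
    [FiniteDimensional ℝ X] (M : X → X → EReal)
    (hM_young : ∀ v ξ : X, ((⟪ξ, v⟫ : ℝ) : EReal) ≤ M v ξ)
    (hM_conv : ∀ ξ x y : X, ∀ t : ℝ, 0 ≤ t → t ≤ 1 →
      M (t • x + (1 - t) • y) ξ ≤ ((t : ℝ) : EReal) * M x ξ + (((1 - t) : ℝ) : EReal) * M y ξ)
    (hM_lsc : ∀ ξ : X, LowerSemicontinuous fun v => M v ξ)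
    (hM_mono : ∀ v ξ : X, M 0 ξ ≤ M v ξ)
    (R : X → ℝ≥0∞)
    (hR_lsc : LowerSemicontinuous R) (hR0 : R 0 = 0)
    (hR_superlinear : Filter.Tendsto (fun v : X => R v / ENNReal.ofReal ‖v‖)
      (Filter.comap norm Filter.atTop) (nhds ⊤))
    (hcontact : ∀ v ξ : X, M v ξ = ((⟪ξ, v⟫ : ℝ) : EReal) ↔
      (R v ≠ ⊤ ∧ ∀ w : X, (R v : EReal) + ((⟪ξ, w - v⟫ : ℝ) : EReal) ≤ (R w : EReal))) :
    ∀ ξ : X, (∃ r : ℝ, M 0 ξ = (r : EReal)) ∧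
      ∃ Rb : X → ℝ≥0∞,
        (∀ x y : X, ∀ t : ℝ, 0 ≤ t → t ≤ 1 →
          Rb (t • x + (1 - t) • y) ≤ ENNReal.ofReal t * Rb x + ENNReal.ofReal (1 - t) * Rb y) ∧
        LowerSemicontinuous Rb ∧ Rb 0 = 0 ∧
        (∀ v : X, (Rb v : EReal) = M v ξ - M 0 ξ) ∧
        (((⨆ w : X, ENNReal.ofReal ⟪ξ, w⟫ - Rb w : ℝ≥0∞) : EReal) = M 0 ξ) ∧
        (∀ v : X, M v ξ =
          (Rb v : EReal) + ((⨆ w : X, ENNReal.ofReal ⟪ξ, w⟫ - Rb w : ℝ≥0∞) : EReal)) := by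
  intro ξ
  obtain ⟨v₀, hRv₀, hsubgrad⟩ := exists_subgradient_of_superlinear hR_lsc hR0 hR_superlinear ξ
  have hMv₀ : M v₀ ξ = ⟪ξ, v₀⟫ := (hcontact v₀ ξ).2 ⟨hRv₀, hsubgrad⟩
  have hM_nonneg : ∀ v, 0 ≤ M v ξ := fun v =>
    (by simpa using hM_young 0 ξ : (0 : EReal) ≤ M 0 ξ).trans (hM_mono v ξ)
  set m : X → ℝ≥0∞ := fun v => (M v ξ).toENNReal
  have hm : ∀ v, (m v : EReal) = M v ξ := fun v => EReal.coe_toENNReal (hM_nonneg v)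
  have hm_mono : ∀ v, m 0 ≤ m v := fun v => EReal.toENNReal_le_toENNReal (hM_mono v ξ)
  have hm_young : ∀ v, ENNReal.ofReal ⟪ξ, v⟫ ≤ m v := fun v =>
    EReal.toENNReal_le_toENNReal (hM_young v ξ)
  have hmv₀ : m v₀ = ENNReal.ofReal ⟪ξ, v₀⟫ := by simp only [m, hMv₀, EReal.real_coe_toENNReal]
  have hm0 : m 0 ≠ ⊤ := ((hm_mono v₀).trans_eq hmv₀).trans_lt ENNReal.ofReal_lt_top |>.ne
  set Rb : X → ℝ≥0∞ := fun v => m v - m 0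
  have hm_eq : ∀ v, m v = Rb v + m 0 := fun v => (tsub_add_cancel_of_le (hm_mono v)).symm
  have hconj : ⨆ w, ENNReal.ofReal ⟪ξ, w⟫ - Rb w = m 0 :=
    ENNReal.iSup_tsub_eq_of_le_add (fun w => (hm_young w).trans_eq (hm_eq w)) v₀
      (hmv₀.symm.trans (hm_eq v₀)) (tsub_le_self.trans_lt (hmv₀ ▸ ENNReal.ofReal_lt_top)).ne
  refine ⟨⟨(m 0).toReal, by rw [EReal.coe_ennreal_toReal hm0, hm]⟩, Rb,
    ENNReal.convex_tsub_const hm_mono (EReal.convex_toENNReal_comp hM_nonneg (hM_conv ξ)), ?_,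
    tsub_self _, fun v => ?_, by rw [hconj, hm],
    fun v => by rw [hconj, ← EReal.coe_ennreal_add, ← hm_eq, hm]⟩
  · exact (EReal.continuous_toENNReal.comp_lowerSemicontinuous (hM_lsc ξ)
      fun _ _ h => EReal.toENNReal_le_toENNReal h).tsub_const _
  · rw [← hm, ← hm, hm_eq v, EReal.coe_ennreal_add, ← EReal.coe_ennreal_toReal hm0,
      EReal.add_sub_cancel_right]

/-- **Force-dependent dissipation potential from a contact-equivalent one.**
Let `M : X × X → ℝ ∪ {+∞}` (realized as an `EReal`-valued map) satisfy the Fenchel-Young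
lower bound `M(v,ξ) ≥ ⟨ξ,v⟩`, be convex and lower semicontinuous in `v`, satisfy
`M(v,ξ) ≥ M(0,ξ)`, and suppose its contact set is the graph of the subdifferential of a
superlinear dissipation potential `R`. Then for each `ξ`, `M(0,ξ)` is finite, the map
`v ↦ M(v,ξ) - M(0,ξ)` is a dissipation potential `R̄_ξ` with Fenchel conjugate satisfying
`(R̄_ξ)*(ξ) = M(0,ξ)`, and `M(v,ξ) = R̄_ξ(v) + (R̄_ξ)*(ξ)` for all `v`. -/
theorem statement7 {X : Type*} [NormedAddCommGroup X] [InnerProductSpace ℝ X]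
    [FiniteDimensional ℝ X] (M : X → X → EReal)
    (hM_young : ∀ v ξ : X, ((⟪ξ, v⟫ : ℝ) : EReal) ≤ M v ξ)
    (hM_conv : ∀ ξ x y : X, ∀ t : ℝ, 0 ≤ t → t ≤ 1 →
      M (t • x + (1 - t) • y) ξ ≤ ((t : ℝ) : EReal) * M x ξ + (((1 - t) : ℝ) : EReal) * M y ξ)
    (hM_lsc : ∀ ξ : X, LowerSemicontinuous fun v => M v ξ)
    (hM_mono : ∀ v ξ : X, M 0 ξ ≤ M v ξ)
    (R : X → ℝ≥0∞)
    (hR_conv : ∀ x y : X, ∀ t : ℝ, 0 ≤ t → t ≤ 1 →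
      R (t • x + (1 - t) • y) ≤ ENNReal.ofReal t * R x + ENNReal.ofReal (1 - t) * R y)
    (hR_lsc : LowerSemicontinuous R) (hR0 : R 0 = 0)
    (hR_superlinear : Filter.Tendsto (fun v : X => R v / ENNReal.ofReal ‖v‖)
      (Filter.comap norm Filter.atTop) (nhds ⊤))
    (hcontact : ∀ v ξ : X, M v ξ = ((⟪ξ, v⟫ : ℝ) : EReal) ↔
      (R v ≠ ⊤ ∧ ∀ w : X, (R v : EReal) + ((⟪ξ, w - v⟫ : ℝ) : EReal) ≤ (R w : EReal))) :
    ∀ ξ : X, (∃ r : ℝ, M 0 ξ = (r : EReal)) ∧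
      ∃ Rb : X → ℝ≥0∞,
        (∀ x y : X, ∀ t : ℝ, 0 ≤ t → t ≤ 1 →
          Rb (t • x + (1 - t) • y) ≤ ENNReal.ofReal t * Rb x + ENNReal.ofReal (1 - t) * Rb y) ∧
        LowerSemicontinuous Rb ∧ Rb 0 = 0 ∧
        (∀ v : X, (Rb v : EReal) = M v ξ - M 0 ξ) ∧
        (((⨆ w : X, ENNReal.ofReal ⟪ξ, w⟫ - Rb w : ℝ≥0∞) : EReal) = M 0 ξ) ∧
        (∀ v : X, M v ξ =
          (Rb v : EReal) + ((⨆ w : X, ENNReal.ofReal ⟪ξ, w⟫ - Rb w : ℝ≥0∞) : EReal)) :=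
  statement7_general M hM_young hM_conv hM_lsc hM_mono R hR_lsc hR0 hR_superlinear hcontact
end

section
/- (Lower bound for the wiggly-dissipation cell functional.) Let μ : ℝ → ℝ be continuous, 1-periodic, with 0 < m ≤ μ(y) for all y. Let v ∈ ℝ with v ≠ 0, ξ ∈ ℝ, and let z : [0,1] → ℝ be continuously differentiable with z(1) = z(0) + sign(v). Then ∫₀¹ [ μ(z(s)) (v z′(s))² / 2 + ξ² / (2 μ(z(s))) ] ds ≥ ξ v. -/
open MeasureTheory intervalIntegral

/-!
Pointwise, the AM–GM inequality `ξ x ≤ μ x² / 2 + ξ² / (2 μ)` with `x = |v| z′` bounds the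
integrand from below by `ξ |v| z′`, and by the fundamental theorem of calculus
`∫₀¹ ξ |v| z′ = ξ |v| (z 1 - z 0) = ξ |v| sign v = ξ v`.
-/

lemma Real.sign_mul_abs (r : ℝ) : Real.sign r * |r| = r := by
  rcases lt_trichotomy r 0 with h | rfl | h
  · rw [Real.sign_of_neg h, abs_of_neg h, neg_one_mul, neg_neg]
  · rw [abs_zero, mul_zero]
  · rw [Real.sign_of_pos h, abs_of_pos h, one_mul]

lemma mul_le_mul_sq_div_two_add_sq_div {a : ℝ} (ha : 0 < a) (x ξ : ℝ) :
    ξ * x ≤ a * x ^ 2 / 2 + ξ ^ 2 / (2 * a) := by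
  have h := two_mul_le_add_mul_sq (a := x) (b := ξ) ha
  rw [mul_comm 2 a, ← div_div, div_eq_inv_mul (ξ ^ 2)]
  linarith

theorem statement9_general (μ : ℝ → ℝ) (hμcont : Continuous μ)
    (m : ℝ) (hm : 0 < m) (hμlb : ∀ y, m ≤ μ y)
    (v ξ : ℝ)
    (z : ℝ → ℝ) (hz : ContDiffOn ℝ 1 z (Set.Icc 0 1))
    (hbc : z 1 = z 0 + Real.sign v) :
    ξ * v ≤ ∫ s in (0:ℝ)..1,
      (μ (z s) * (v * derivWithin z (Set.Icc 0 1) s) ^ 2 / 2 + ξ ^ 2 / (2 * μ (z s))) := by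
  set z' := derivWithin z (Set.Icc 0 1)
  have hμpos : ∀ y, 0 < μ y := fun y => hm.trans_le (hμlb y)
  have hz'c : ContinuousOn z' (Set.Icc 0 1) :=
    hz.continuousOn_derivWithin (uniqueDiffOn_Icc zero_lt_one) le_rfl
  have hμzc : ContinuousOn (fun s => μ (z s)) (Set.Icc 0 1) :=
    hμcont.comp_continuousOn hz.continuousOn
  have hftc : ∫ s in (0:ℝ)..1, z' s = Real.sign v := by
    rw [integral_derivWithin_Icc_of_contDiffOn_Icc hz zero_le_one, hbc, add_sub_cancel_left]
  calc ξ * v = ∫ s in (0:ℝ)..1, ξ * |v| * z' s := by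
        rw [intervalIntegral.integral_const_mul, hftc, mul_assoc, mul_comm |v|, Real.sign_mul_abs]
    _ ≤ _ := by
      refine integral_mono_on zero_le_one
        ((continuousOn_const.mul hz'c).intervalIntegrable_of_Icc zero_le_one)
        (ContinuousOn.intervalIntegrable_of_Icc zero_le_one ?_) fun s _ => ?_
      · exact ((hμzc.mul ((continuousOn_const.mul hz'c).pow 2)).div_const 2).add
          (continuousOn_const.div (continuousOn_const.mul hμzc) fun s _ => by
            have := hμpos (z s); positivity)
      · have h := mul_le_mul_sq_div_two_add_sq_div (hμpos (z s)) (|v| * z' s) ξ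
        rwa [mul_pow, sq_abs, ← mul_pow, ← mul_assoc] at h

/-- **Lower bound for the wiggly-dissipation cell functional.**
For `μ` continuous, 1-periodic and bounded below by `m > 0`, any `v ≠ 0`, `ξ ∈ ℝ`, and
any `C¹` curve `z : [0,1] → ℝ` with `z(1) = z(0) + sign v`, one has
`∫₀¹ [μ(z)(v z′)²/2 + ξ²/(2μ(z))] ds ≥ ξ v`. -/
theorem statement9 (μ : ℝ → ℝ) (hμcont : Continuous μ) (hμper : ∀ y, μ (y + 1) = μ y)
    (m : ℝ) (hm : 0 < m) (hμlb : ∀ y, m ≤ μ y)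
    (v ξ : ℝ) (hv : v ≠ 0)
    (z : ℝ → ℝ) (hz : ContDiffOn ℝ 1 z (Set.Icc 0 1))
    (hbc : z 1 = z 0 + Real.sign v) :
    ξ * v ≤ ∫ s in (0:ℝ)..1,
      (μ (z s) * (v * derivWithin z (Set.Icc 0 1) s) ^ 2 / 2 + ξ ^ 2 / (2 * μ (z s))) :=
  statement9_general μ hμcont m hm hμlb v ξ z hz hbc
end

section
/- (Contact in the wiggly-dissipation cell problem forces the averaged kinetic relation.) Let μ : ℝ → ℝ be continuous, 1-periodic, with 0 < m ≤ μ(y) for all y, and set μ̄ := ∫₀¹ μ(y) dy. Let v ≠ 0 and ξ ∈ ℝ, and suppose z : [0,1] → ℝ is continuously differentiable with z(1) = z(0) + sign(v) and ∫₀¹ [ μ(z(s)) (v z′(s))² / 2 + ξ² / (2 μ(z(s))) ] ds = ξ v. Then ξ = μ̄ v. -/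
/-!
Write `ε = sign v`, `g = z′` and `c = ε ξ`. Completing the square,
`μ(z)(v g)²/2 + ξ²/(2μ(z)) = c (v g) + (μ(z) v g - c)² / (2μ(z))`,
and `∫₀¹ c v g = ξ v` because `∫₀¹ z′ = ε`. Contact therefore makes the nonnegative remainder
integrate to zero, so the flux `μ(z) v z′` equals `c` almost everywhere. Integrating,
`c = v ∫₀¹ μ(z) z′ = v ∫_{z(0)}^{z(0)+ε} μ = ε μ̄ v` by periodicity, and dividing by `ε`
gives `ξ = μ̄ v`.
-/

open MeasureTheory intervalIntegral Set

lemma Real.sign_sq_of_ne_zero {v : ℝ} (hv : v ≠ 0) : Real.sign v ^ 2 = 1 := by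
  rcases Real.sign_apply_eq_of_ne_zero v hv with h | h <;> simp [h]

lemma mul_sq_div_two_add_sq_div_two_mul {w u c : ℝ} (hw : w ≠ 0) :
    w * u ^ 2 / 2 + c ^ 2 / (2 * w) = c * u + (w * u - c) ^ 2 / (2 * w) := by
  field_simp
  ring

lemma Function.Periodic.intervalIntegral_add_sign_mul_eq {f : ℝ → ℝ} {T : ℝ}
    (hf : Function.Periodic f T) (hc : Continuous f) (t v : ℝ) :
    ∫ x in t..t + Real.sign v * T, f x = Real.sign v * ∫ x in 0..T, f x := by
  have h_zmul (n : ℤ) : ∫ x in t..t + n * T, f x = n * ∫ x in 0..T, f x := by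
    simpa [hf.intervalIntegral_add_eq t 0] using
      hf.intervalIntegral_add_zsmul_eq n t fun _ _ => hc.intervalIntegrable _ _
  rcases Real.sign_apply_eq v with h | h | h <;> rw [h]
  · exact_mod_cast h_zmul (-1)
  · simp
  · exact_mod_cast h_zmul 1

lemma integral_comp_mul_derivWithin_Icc {a b : ℝ} (hab : a ≤ b) {z f : ℝ → ℝ}
    (hz : ContDiffOn ℝ 1 z (Icc a b)) (hf : Continuous f) :
    ∫ x in a..b, f (z x) * derivWithin z (Icc a b) x = ∫ u in z a..z b, f u := by
  rcases hab.eq_or_lt with rfl | hab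
  · simp
  have hIcc : uIcc a b = Icc a b := uIcc_of_le hab.le
  refine integral_comp_mul_deriv'' (hIcc ▸ hz.continuousOn) (fun x hx => ?_)
    (hIcc ▸ hz.continuousOn_derivWithin (uniqueDiffOn_Icc hab) le_rfl) hf.continuousOn
  rw [min_eq_left hab.le, max_eq_right hab.le] at hx
  have hdiff := hz.differentiableOn one_ne_zero x (Ioo_subset_Icc_self hx)
  exact (hdiff.hasDerivWithinAt.hasDerivAt (Icc_mem_nhds hx.1 hx.2)).hasDerivWithinAt

/-- Equality case of Young's inequality `c u ≤ w u² / 2 + c² / (2 w)`, integrated. -/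
lemma ae_mul_eq_of_integral_eq_of_young {a b c : ℝ} {w u : ℝ → ℝ} (hab : a ≤ b)
    (hw : ContinuousOn w (Icc a b)) (hw_pos : ∀ s ∈ Icc a b, 0 < w s)
    (hu : ContinuousOn u (Icc a b))
    (heq : ∫ s in a..b, (w s * u s ^ 2 / 2 + c ^ 2 / (2 * w s)) = ∫ s in a..b, c * u s) :
    ∀ᵐ s ∂volume.restrict (Ioc a b), w s * u s = c := by
  have hIcc : uIcc a b = Icc a b := uIcc_of_le hab
  have hw_ne : ∀ s ∈ Icc a b, 2 * w s ≠ 0 := fun s hs => by linarith [hw_pos s hs]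
  set e : ℝ → ℝ := fun s => (w s * u s - c) ^ 2 / (2 * w s)
  have he_cont : ContinuousOn e (Icc a b) :=
    (((hw.mul hu).sub continuousOn_const).pow 2).div (continuousOn_const.mul hw) hw_ne
  have he_int : IntervalIntegrable e volume a b := (hIcc ▸ he_cont).intervalIntegrable
  have hcu_int : IntervalIntegrable (fun s => c * u s) volume a b :=
    (hIcc ▸ hu.const_smul c).intervalIntegrable
  have he_zero : ∫ s in a..b, e s = 0 := by
    have hsplit : ∫ s in a..b, (w s * u s ^ 2 / 2 + c ^ 2 / (2 * w s))
        = ∫ s in a..b, (c * u s + e s) := integral_congr fun s hs =>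
      mul_sq_div_two_add_sq_div_two_mul (w := w s) (by linarith [hw_pos s (hIcc ▸ hs)])
    rw [hsplit, integral_add hcu_int he_int] at heq
    linarith
  have he_nonneg : 0 ≤ᵐ[volume.restrict (Ioc a b)] e :=
    (ae_restrict_mem measurableSet_Ioc).mono fun s hs =>
      div_nonneg (sq_nonneg _) (by linarith [hw_pos s (Ioc_subset_Icc_self hs)])
  filter_upwards [(integral_eq_zero_iff_of_le_of_nonneg_ae hab he_nonneg he_int).mp he_zero,
    ae_restrict_mem measurableSet_Ioc] with s hs hs_mem
  have := (div_eq_zero_iff.mp hs).resolve_right (hw_ne s (Ioc_subset_Icc_self hs_mem))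
  linarith [pow_eq_zero_iff two_ne_zero |>.mp this]

/-- **Contact in the wiggly-dissipation cell problem forces the averaged
kinetic relation.** For `μ` continuous, 1-periodic and bounded below by `m > 0`, with
mean `μ̄ = ∫₀¹ μ`, if `v ≠ 0`, `ξ ∈ ℝ` and some `C¹` curve `z : [0,1] → ℝ` with
`z(1) = z(0) + sign v` achieves `∫₀¹ [μ(z)(v z′)²/2 + ξ²/(2μ(z))] ds = ξ v`,
then `ξ = μ̄ v`. -/
theorem statement10 (μ : ℝ → ℝ) (hμcont : Continuous μ) (hμper : ∀ y, μ (y + 1) = μ y)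
    (m : ℝ) (hm : 0 < m) (hμlb : ∀ y, m ≤ μ y)
    (v ξ : ℝ) (hv : v ≠ 0)
    (z : ℝ → ℝ) (hz : ContDiffOn ℝ 1 z (Set.Icc 0 1))
    (hbc : z 1 = z 0 + Real.sign v)
    (hcontact : (∫ s in (0:ℝ)..1,
        (μ (z s) * (v * derivWithin z (Set.Icc 0 1) s) ^ 2 / 2 + ξ ^ 2 / (2 * μ (z s))))
      = ξ * v) :
    ξ = (∫ y in (0:ℝ)..1, μ y) * v := by
  set ε := Real.sign v
  set g := derivWithin z (Icc 0 1)
  have hε : ε ^ 2 = 1 := Real.sign_sq_of_ne_zero hv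
  have hg_int : ∫ s in (0:ℝ)..1, g s = ε := by
    rw [integral_derivWithin_Icc_of_contDiffOn_Icc hz zero_le_one, hbc]
    ring
  have hflux_ae : ∀ᵐ s ∂volume.restrict (Ioc 0 1), μ (z s) * (v * g s) = ε * ξ := by
    refine ae_mul_eq_of_integral_eq_of_young zero_le_one
      (hμcont.comp_continuousOn hz.continuousOn)
      (fun s _ => hm.trans_le (hμlb _))
      (continuousOn_const.mul (hz.continuousOn_derivWithin (uniqueDiffOn_Icc one_pos) le_rfl)) ?_
    rw [mul_pow, hε, one_mul, hcontact, intervalIntegral.integral_const_mul,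
      intervalIntegral.integral_const_mul, hg_int]
    linear_combination (-ξ * v) * hε
  have hflux : v * ∫ s in (0:ℝ)..1, μ (z s) * g s = ε * ξ := by
    rw [← intervalIntegral.integral_const_mul, integral_of_le zero_le_one,
      MeasureTheory.integral_congr_ae (g := fun _ => ε * ξ)
        (hflux_ae.mono fun s hs => by linear_combination hs)]
    simp
  have hmean : ∫ s in (0:ℝ)..1, μ (z s) * g s = ε * ∫ y in (0:ℝ)..1, μ y := by
    rw [integral_comp_mul_derivWithin_Icc zero_le_one hz hμcont, hbc,
      ← Function.Periodic.intervalIntegral_add_sign_mul_eq (T := 1) hμper hμcont, mul_one]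
  rw [hmean] at hflux
  linear_combination -ε * hflux + ((∫ y in (0:ℝ)..1, μ y) * v - ξ) * hε
end

section
/- (Attainment of contact in the wiggly-dissipation cell problem.) Let μ : ℝ → ℝ be continuous, 1-periodic, with 0 < m ≤ μ(y) for all y, and set μ̄ := ∫₀¹ μ(y) dy. Let v ≠ 0 and set ξ := μ̄ v. Then there exists a continuously differentiable z : [0,1] → ℝ with z(1) = z(0) + sign(v) such that ∫₀¹ [ μ(z(s)) (v z′(s))² / 2 + ξ² / (2 μ(z(s))) ] ds = ξ v. -/
/-!
Let `c = μ̄` and `Φ y = ∫₀^y μ`. Since `Φ' = μ ≥ m > 0`, `Φ` is an increasing bijection of `ℝ`, and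
periodicity gives `Φ (sign v) = c · sign v`. The curve `z s = Φ⁻¹ (c · sign v · s)` runs from `0` to
`sign v` with `μ(z) z' = c · sign v`, which is exactly the equality case `μ(z) |v z'| = |ξ|` of
Young's inequality `μ(z)(v z')²/2 + ξ²/(2μ(z)) ≥ |ξ v z'|`. The integrand is therefore
`sign v · ξ v z'`, whose integral is `sign v · ξ v (z 1 - z 0) = ξ v`.
-/

open MeasureTheory intervalIntegral Filter

section LowerBoundedDeriv

variable {f f' : ℝ → ℝ} {m : ℝ}

theorem surjective_of_hasDerivAt_of_le (hf : ∀ x, HasDerivAt f (f' x) x) (hm : 0 < m)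
    (hf' : ∀ x, m ≤ f' x) : Function.Surjective f := by
  have hdiff : Differentiable ℝ f := fun x => (hf x).differentiableAt
  have hgrowth := mul_sub_le_image_sub_of_le_deriv hdiff fun x => (hf x).deriv ▸ hf' x
  have hline : Tendsto (fun y => f 0 + m * y) atTop atTop :=
    tendsto_atTop_add_const_left _ _ (tendsto_id.const_mul_atTop hm)
  have hline' : Tendsto (fun y => f 0 + m * y) atBot atBot :=
    tendsto_atBot_add_const_left _ _ (tendsto_id.const_mul_atBot hm)
  refine hdiff.continuous.surjective (tendsto_atTop_mono' _ ?_ hline)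
    (tendsto_atBot_mono' _ ?_ hline')
  · filter_upwards [eventually_ge_atTop 0] with y hy
    linarith [hgrowth hy]
  · filter_upwards [eventually_le_atBot 0] with y hy
    linarith [hgrowth hy]

noncomputable def orderIsoOfHasDerivAtOfLe (hf : ∀ x, HasDerivAt f (f' x) x) (hm : 0 < m)
    (hf' : ∀ x, m ≤ f' x) : ℝ ≃o ℝ :=
  StrictMono.orderIsoOfSurjective f
    (strictMono_of_hasDerivAt_pos hf fun x => hm.trans_le (hf' x))
    (surjective_of_hasDerivAt_of_le hf hm hf')

theorem orderIsoOfHasDerivAtOfLe_apply (hf : ∀ x, HasDerivAt f (f' x) x) (hm : 0 < m)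
    (hf' : ∀ x, m ≤ f' x) (x : ℝ) : orderIsoOfHasDerivAtOfLe hf hm hf' x = f x :=
  rfl

theorem hasDerivAt_orderIsoOfHasDerivAtOfLe_symm (hf : ∀ x, HasDerivAt f (f' x) x)
    (hm : 0 < m) (hf' : ∀ x, m ≤ f' x) (y : ℝ) :
    HasDerivAt (orderIsoOfHasDerivAtOfLe hf hm hf').symm
      (f' ((orderIsoOfHasDerivAtOfLe hf hm hf').symm y))⁻¹ y := by
  set e := orderIsoOfHasDerivAtOfLe hf hm hf'
  exact (hf (e.symm y)).of_local_left_inverse e.symm.toHomeomorph.continuous.continuousAt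
    (hm.trans_le (hf' _)).ne' (Eventually.of_forall e.apply_symm_apply)

end LowerBoundedDeriv

theorem Function.Periodic.intervalIntegral_zero_intCast_mul {f : ℝ → ℝ} {T : ℝ}
    (hf : Function.Periodic f T) (h_int : ∀ t₁ t₂, IntervalIntegrable f volume t₁ t₂) (n : ℤ) :
    ∫ x in 0..n * T, f x = n * ∫ x in 0..T, f x := by
  simpa using hf.intervalIntegral_add_zsmul_eq n 0 h_int

theorem Function.Periodic.intervalIntegral_zero_sign_mul {f : ℝ → ℝ} {T : ℝ}
    (hf : Function.Periodic f T) (h_int : ∀ t₁ t₂, IntervalIntegrable f volume t₁ t₂) (r : ℝ) :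
    ∫ x in 0..Real.sign r * T, f x = Real.sign r * ∫ x in 0..T, f x := by
  obtain ⟨n, hn⟩ : ∃ n : ℤ, (n : ℝ) = Real.sign r := by
    rcases Real.sign_apply_eq r with h | h | h
    exacts [⟨-1, by simp [h]⟩, ⟨0, by simp [h]⟩, ⟨1, by simp [h]⟩]
  rw [← hn, hf.intervalIntegral_zero_intCast_mul h_int]

/-- Equality case of Young's inequality `a w² / 2 + ξ² / (2 a) ≥ |ξ w|`. -/
theorem mul_sq_div_two_add_sq_div_eq {a w ξ σ : ℝ} (ha : a ≠ 0) (hσ : σ ^ 2 = 1)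
    (h : a * w = σ * ξ) : a * w ^ 2 / 2 + ξ ^ 2 / (2 * a) = σ * ξ * w := by
  have hξ : ξ ^ 2 = (a * w) ^ 2 := by rw [h, mul_pow, hσ, one_mul]
  rw [hξ, ← h]
  field_simp
  ring

theorem exists_contDiff_hasDerivAt_div {μ : ℝ → ℝ} (hμ : Continuous μ) {m : ℝ} (hm : 0 < m)
    (hμlb : ∀ y, m ≤ μ y) {a b : ℝ} (hab : ∫ y in 0..b, μ y = a) :
    ∃ z : ℝ → ℝ, ContDiff ℝ 1 z ∧ z 0 = 0 ∧ z 1 = b ∧ ∀ s, HasDerivAt z (a / μ (z s)) s := by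
  have hΦ : ∀ y, HasDerivAt (fun y => ∫ t in (0:ℝ)..y, μ t) (μ y) y := fun y =>
    (hμ.integral_hasStrictDerivAt 0 y).hasDerivAt
  set e := orderIsoOfHasDerivAtOfLe hΦ hm hμlb
  set z : ℝ → ℝ := fun s => e.symm (a * s)
  have hz : ∀ s, HasDerivAt z (a / μ (z s)) s := fun s => by
    have hlin : HasDerivAt (fun s : ℝ => a * s) a s := by
      simpa using (hasDerivAt_id s).const_mul a
    rw [div_eq_inv_mul]
    exact (hasDerivAt_orderIsoOfHasDerivAtOfLe_symm hΦ hm hμlb _).comp s hlin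
  have hz'cont : Continuous fun s => a / μ (z s) :=
    continuous_const.div (hμ.comp (e.symm.toHomeomorph.continuous.comp (continuous_const_mul a)))
      fun s => (hm.trans_le (hμlb _)).ne'
  refine ⟨z, contDiff_one_iff_deriv.2
    ⟨fun s => (hz s).differentiableAt, (funext fun s => (hz s).deriv) ▸ hz'cont⟩, ?_, ?_, hz⟩
  · simp only [z, mul_zero]
    rw [e.symm_apply_eq, orderIsoOfHasDerivAtOfLe_apply, integral_same]
  · simp only [z, mul_one]
    rw [e.symm_apply_eq, orderIsoOfHasDerivAtOfLe_apply, hab]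

/-- **Attainment of contact in the wiggly-dissipation cell problem.**
For `μ` continuous, 1-periodic and bounded below by `m > 0`, with mean `μ̄ = ∫₀¹ μ`,
and any `v ≠ 0`, setting `ξ := μ̄ v` there is a `C¹` curve `z : [0,1] → ℝ` with
`z(1) = z(0) + sign v` and `∫₀¹ [μ(z)(v z′)²/2 + ξ²/(2μ(z))] ds = ξ v`. -/
theorem statement11 (μ : ℝ → ℝ) (hμcont : Continuous μ) (hμper : ∀ y, μ (y + 1) = μ y)
    (m : ℝ) (hm : 0 < m) (hμlb : ∀ y, m ≤ μ y)
    (v : ℝ) (hv : v ≠ 0) :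
    ∃ z : ℝ → ℝ, ContDiffOn ℝ 1 z (Set.Icc 0 1) ∧ z 1 = z 0 + Real.sign v ∧
      (∫ s in (0:ℝ)..1,
          (μ (z s) * (v * derivWithin z (Set.Icc 0 1) s) ^ 2 / 2 +
            ((∫ y in (0:ℝ)..1, μ y) * v) ^ 2 / (2 * μ (z s))))
        = ((∫ y in (0:ℝ)..1, μ y) * v) * v := by
  set c := ∫ y in (0:ℝ)..1, μ y
  set σ := Real.sign v
  have hσ : σ ^ 2 = 1 := by
    rcases Real.sign_apply_eq_of_ne_zero v hv with h | h <;> simp [σ, h]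
  have hcσ : ∫ y in 0..σ, μ y = σ * c := by
    simpa using Function.Periodic.intervalIntegral_zero_sign_mul (T := 1) hμper
      (fun a b => hμcont.intervalIntegrable a b) v
  obtain ⟨z, hzC1, hz0, hz1, hz⟩ := exists_contDiff_hasDerivAt_div hμcont hm hμlb hcσ
  have hμz : ∀ s, μ (z s) ≠ 0 := fun s => (hm.trans_le (hμlb _)).ne'
  have hintegrand : Set.EqOn
      (fun s => μ (z s) * (v * derivWithin z (Set.Icc 0 1) s) ^ 2 / 2 + (c * v) ^ 2 / (2 * μ (z s)))
      (fun s => σ * (c * v) * v * (σ * c / μ (z s))) (Set.uIcc 0 1) := fun s hs => by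
    rw [Set.uIcc_of_le zero_le_one] at hs
    have hcontact : μ (z s) * (v * (σ * c / μ (z s))) = σ * (c * v) := by
      field_simp [hμz s]
    dsimp only
    rw [(hz s).hasDerivWithinAt.derivWithin (uniqueDiffOn_Icc one_pos s hs),
      mul_sq_div_two_add_sq_div_eq (hμz s) hσ hcontact]
    ring
  have hz'cont : Continuous fun s => σ * c / μ (z s) :=
    continuous_const.div (hμcont.comp hzC1.continuous) hμz
  refine ⟨z, hzC1.contDiffOn, by rw [hz0, hz1, zero_add], ?_⟩
  rw [integral_congr hintegrand, intervalIntegral.integral_const_mul,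
    integral_eq_sub_of_hasDerivAt (fun s _ => hz s) (hz'cont.intervalIntegrable 0 1), hz0, hz1]
  linear_combination c * v * v * hσ
end

section
/- (Value of the cell problem for the effective Riemannian metric.) Let μ : ℝ → ℝ be continuous, 1-periodic, with 0 < m ≤ μ(y) for all y. Then the infimum of ∫₀¹ μ(z(s)) z′(s)² ds over all continuously differentiable z : [0,1] → ℝ with z(1) = z(0) + 1 is attained and equals ( ∫₀¹ √(μ(y)) dy )². -/
/-!
Write `w = √μ`, a positive `1`-periodic weight, so the energy of `z` is `∫₀¹ (w(z) z')²`.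
For every admissible `z` the substitution `u = z(s)` and periodicity of `w` give
`∫₀¹ w(z) z' = ∫_{z 0}^{z 0 + 1} w = ∫₀¹ w`, so Cauchy–Schwarz on `[0, 1]` bounds the energy
below by `(∫₀¹ w)²`. Equality holds when `w(z) z'` is constant: take `z` the inverse of the
primitive `x ↦ ∫₀ˣ w`, a bijection of `ℝ` since `w` is positive and periodic, evaluated at
`s ∫₀¹ w`.
-/

open MeasureTheory intervalIntegral Set Function

theorem sq_integral_le_integral_sq {h : ℝ → ℝ} (hh : IntervalIntegrable h volume 0 1)
    (hh2 : IntervalIntegrable (fun s ↦ h s ^ 2) volume 0 1) :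
    (∫ s in (0 : ℝ)..1, h s) ^ 2 ≤ ∫ s in (0 : ℝ)..1, h s ^ 2 := by
  set c := ∫ s in (0 : ℝ)..1, h s
  have hvar : ∫ s in (0 : ℝ)..1, (h s - c) ^ 2 = (∫ s in (0 : ℝ)..1, h s ^ 2) - c ^ 2 := by
    have hexp : ∀ s, (h s - c) ^ 2 = h s ^ 2 - 2 * c * h s + c ^ 2 := fun s ↦ by ring
    simp_rw [hexp]
    rw [integral_add (hh2.sub (hh.const_mul _)) intervalIntegrable_const,
      integral_sub hh2 (hh.const_mul _), intervalIntegral.integral_const_mul]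
    simp only [intervalIntegral.integral_const, sub_zero, smul_eq_mul, one_mul]
    ring
  have hnonneg : 0 ≤ ∫ s in (0 : ℝ)..1, (h s - c) ^ 2 :=
    integral_nonneg zero_le_one fun s _ ↦ sq_nonneg _
  linarith

section Reparametrization

variable {z w : ℝ → ℝ} {a b T : ℝ}

theorem intervalIntegral.integral_derivWithin_mul_comp (hab : a < b)
    (hz : ContDiffOn ℝ 1 z (Icc a b)) (hw : Continuous w) :
    ∫ s in a..b, derivWithin z (Icc a b) s * w (z s) = ∫ u in z a..z b, w u := by
  have hab' : uIcc a b = Icc a b := uIcc_of_le hab.le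
  have hderiv : ∀ x ∈ Ioo (min a b) (max a b),
      HasDerivWithinAt z (derivWithin z (Icc a b) x) (Ioi x) x := by
    rw [min_eq_left hab.le, max_eq_right hab.le]
    intro x hx
    exact ((hz.differentiableOn one_ne_zero x (Ioo_subset_Icc_self hx)).hasDerivWithinAt
      ).mono_of_mem_nhdsWithin (mem_nhdsWithin_of_mem_nhds (Icc_mem_nhds hx.1 hx.2))
  have := integral_comp_mul_deriv'' (g := w) (hab' ▸ hz.continuousOn) hderiv
    (hab' ▸ hz.continuousOn_derivWithin (uniqueDiffOn_Icc hab) le_rfl) hw.continuousOn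
  simpa only [comp_apply, mul_comm] using this

theorem Function.Periodic.integral_derivWithin_mul_comp (hper : w.Periodic T)
    (hab : a < b) (hz : ContDiffOn ℝ 1 z (Icc a b)) (hzT : z b = z a + T) (hw : Continuous w) :
    ∫ s in a..b, derivWithin z (Icc a b) s * w (z s) = ∫ u in 0..T, w u := by
  rw [intervalIntegral.integral_derivWithin_mul_comp hab hz hw, hzT,
    hper.intervalIntegral_add_eq (z a) 0, zero_add]

theorem strictMono_intervalIntegral_of_pos (hw : Continuous w) (hpos : ∀ y, 0 < w y) :
    StrictMono fun x ↦ ∫ t in (0 : ℝ)..x, w t :=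
  strictMono_of_deriv_pos fun x ↦ by rw [Continuous.deriv_integral w hw 0 x]; exact hpos x

theorem Function.Periodic.surjective_intervalIntegral_of_pos (hper : w.Periodic T) (hT : 0 < T)
    (hw : Continuous w) (hpos : ∀ y, 0 < w y) :
    Surjective fun x ↦ ∫ t in (0 : ℝ)..x, w t :=
  Continuous.surjective (continuous_primitive (hw.intervalIntegrable) 0)
    (hper.tendsto_atTop_intervalIntegral_of_pos' (hw.intervalIntegrable 0 T) hpos hT)
    (hper.tendsto_atBot_intervalIntegral_of_pos' (hw.intervalIntegrable 0 T) hpos hT)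

theorem Function.Periodic.exists_contDiff_hasDerivAt_integral_div (hper : w.Periodic T) (hT : 0 < T)
    (hw : Continuous w) (hpos : ∀ y, 0 < w y) :
    ∃ z : ℝ → ℝ, ContDiff ℝ 1 z ∧ z 0 = 0 ∧ z 1 = T ∧
      ∀ s, HasDerivAt z ((∫ u in 0..T, w u) / w (z s)) s := by
  set c := ∫ u in 0..T, w u
  let e := (strictMono_intervalIntegral_of_pos hw hpos).orderIsoOfSurjective _
    (hper.surjective_intervalIntegral_of_pos hT hw hpos)
  have he : ∀ x, e x = ∫ t in (0 : ℝ)..x, w t := fun _ ↦ rfl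
  have he_symm : ∀ y, HasDerivAt e.symm (w (e.symm y))⁻¹ y := fun y ↦
    HasDerivAt.of_local_left_inverse e.symm.continuous.continuousAt
      (hw.integral_hasStrictDerivAt 0 _).hasDerivAt (hpos _).ne'
      (Filter.Eventually.of_forall e.apply_symm_apply)
  have hz : ∀ s, HasDerivAt (fun s ↦ e.symm (c * s)) (c / w (e.symm (c * s))) s := fun s ↦ by
    rw [div_eq_inv_mul]
    exact (he_symm (c * s)).comp s (by simpa using (hasDerivAt_id s).const_mul c)
  refine ⟨fun s ↦ e.symm (c * s), ?_, ?_, ?_, hz⟩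
  · rw [contDiff_one_iff_deriv]
    refine ⟨fun s ↦ (hz s).differentiableAt, ?_⟩
    rw [funext fun s ↦ (hz s).deriv]
    exact continuous_const.div (hw.comp (e.symm.continuous.comp (continuous_const_mul c)))
      fun s ↦ (hpos _).ne'
  · simpa using e.symm_apply_eq.2 (he 0).symm
  · simpa using e.symm_apply_eq.2 (he T).symm

end Reparametrization

/-- **Value of the cell problem for the effective Riemannian metric.**
For `μ` continuous, 1-periodic and bounded below by `m > 0`, the infimum of
`∫₀¹ μ(z(s)) z′(s)² ds` over all `C¹` curves `z : [0,1] → ℝ` with `z(1) = z(0) + 1` is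
attained and equals `(∫₀¹ √(μ(y)) dy)²`. -/
theorem statement12 (μ : ℝ → ℝ) (hμcont : Continuous μ) (hμper : ∀ y, μ (y + 1) = μ y)
    (m : ℝ) (hm : 0 < m) (hμlb : ∀ y, m ≤ μ y) :
    (∃ z : ℝ → ℝ, ContDiffOn ℝ 1 z (Set.Icc 0 1) ∧ z 1 = z 0 + 1 ∧
      (∫ s in (0:ℝ)..1, μ (z s) * derivWithin z (Set.Icc 0 1) s ^ 2)
        = (∫ y in (0:ℝ)..1, Real.sqrt (μ y)) ^ 2) ∧
    ∀ z : ℝ → ℝ, ContDiffOn ℝ 1 z (Set.Icc 0 1) → z 1 = z 0 + 1 →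
      (∫ y in (0:ℝ)..1, Real.sqrt (μ y)) ^ 2
        ≤ ∫ s in (0:ℝ)..1, μ (z s) * derivWithin z (Set.Icc 0 1) s ^ 2 := by
  have hμpos : ∀ y, 0 < μ y := fun y ↦ hm.trans_le (hμlb y)
  set w := fun y ↦ √(μ y)
  have hw : Continuous w := hμcont.sqrt
  have hwper : w.Periodic 1 := fun y ↦ by simp only [w, hμper]
  have hwpos : ∀ y, 0 < w y := fun y ↦ Real.sqrt_pos.2 (hμpos y)
  have henergy : ∀ (z : ℝ → ℝ) s, μ (z s) * derivWithin z (Icc 0 1) s ^ 2 =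
      (derivWithin z (Icc 0 1) s * w (z s)) ^ 2 := fun z s ↦ by
    rw [mul_pow, Real.sq_sqrt (hμpos _).le, mul_comm]
  refine ⟨?_, fun z hz hz1 ↦ ?_⟩
  · obtain ⟨z, hzC, hz0, hz1, hz'⟩ := hwper.exists_contDiff_hasDerivAt_integral_div one_pos hw hwpos
    refine ⟨z, hzC.contDiffOn, by rw [hz0, hz1, zero_add], ?_⟩
    have hconst : EqOn (fun s ↦ μ (z s) * derivWithin z (Icc 0 1) s ^ 2)
        (fun _ ↦ (∫ y in (0 : ℝ)..1, w y) ^ 2) (uIcc 0 1) := fun s hs ↦ by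
      rw [uIcc_of_le zero_le_one] at hs
      dsimp only
      rw [henergy, (hz' s).hasDerivWithinAt.derivWithin (uniqueDiffOn_Icc one_pos s hs),
        div_mul_cancel₀ _ (hwpos _).ne']
    simp [integral_congr hconst]
  · have hint : ContinuousOn (fun s ↦ derivWithin z (Icc 0 1) s * w (z s)) (Icc 0 1) :=
      (hz.continuousOn_derivWithin (uniqueDiffOn_Icc one_pos) le_rfl).mul
        (hw.comp_continuousOn hz.continuousOn)
    simp only [henergy, ← hwper.integral_derivWithin_mul_comp one_pos hz hz1 hw]
    exact sq_integral_le_integral_sq (hint.intervalIntegrable_of_Icc zero_le_one)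
      ((hint.pow 2).intervalIntegrable_of_Icc zero_le_one)
end

section
/- (Value of the cell problem on the axis v = 0.) Let μ : [0,1] → ℝ be continuous with 0 < m ≤ μ(y) for all y, and let μ_max := max_{y ∈ [0,1]} μ(y). Then the infimum of ∫₀¹ b(y)/μ(y) dy over all continuous b : [0,1] → ℝ with b(y) > 0 for all y and ∫₀¹ b(y) dy = 1 equals 1/μ_max. -/
open MeasureTheory intervalIntegral

/-- **Value of the cell problem on the axis v = 0.**
For `μ : [0,1] → ℝ` continuous with `0 < m ≤ μ` and maximum value `μ_max`, the infimum
of `∫₀¹ b(y)/μ(y) dy` over continuous densities `b > 0` on `[0,1]` with `∫₀¹ b = 1`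
equals `1/μ_max`. -/
theorem statement13 (μ : ℝ → ℝ) (hμcont : ContinuousOn μ (Set.Icc 0 1))
    (m : ℝ) (hm : 0 < m) (hμlb : ∀ y ∈ Set.Icc (0:ℝ) 1, m ≤ μ y)
    (μmax : ℝ) (hμmax : IsGreatest (μ '' Set.Icc (0:ℝ) 1) μmax) :
    sInf {r : ℝ | ∃ b : ℝ → ℝ, ContinuousOn b (Set.Icc 0 1) ∧
        (∀ y ∈ Set.Icc (0:ℝ) 1, 0 < b y) ∧ (∫ y in (0:ℝ)..1, b y) = 1 ∧
        r = ∫ y in (0:ℝ)..1, b y / μ y}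
      = 1 / μmax := by
  have huIcc : Set.uIcc (0:ℝ) 1 = Set.Icc 0 1 := Set.uIcc_of_le zero_le_one
  set S : Set ℝ := {r : ℝ | ∃ b : ℝ → ℝ, ContinuousOn b (Set.Icc 0 1) ∧
        (∀ y ∈ Set.Icc (0:ℝ) 1, 0 < b y) ∧ (∫ y in (0:ℝ)..1, b y) = 1 ∧
        r = ∫ y in (0:ℝ)..1, b y / μ y} with hS
  obtain ⟨⟨y₀, hy₀, hy₀eq⟩, hub⟩ := hμmax
  have hμmax_pos : 0 < μmax := hy₀eq ▸ (hm.trans_le (hμlb y₀ hy₀))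
  have hμpos : ∀ y ∈ Set.Icc (0:ℝ) 1, 0 < μ y := fun y hy => hm.trans_le (hμlb y hy)
  have hμne : ∀ y ∈ Set.Icc (0:ℝ) 1, μ y ≠ 0 := fun y hy => (hμpos y hy).ne'
  -- integrability facts
  have hintμpow : ∀ n : ℕ, IntervalIntegrable (fun y => μ y ^ n) volume 0 1 := fun n =>
    ((hμcont.pow n).mono huIcc.subset).intervalIntegrable
  -- lower bound: every element of S is ≥ 1/μmax
  have hlb : ∀ r ∈ S, 1 / μmax ≤ r := by
    rintro r ⟨b, hbcont, hbpos, hbint, rfl⟩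
    have hbμcont : ContinuousOn (fun y => b y / μ y) (Set.Icc 0 1) := hbcont.div hμcont hμne
    have h1 : (∫ y in (0:ℝ)..1, b y / μmax) ≤ ∫ y in (0:ℝ)..1, b y / μ y := by
      apply integral_mono_on zero_le_one
      · exact ((hbcont.div_const _).mono huIcc.subset).intervalIntegrable
      · exact (hbμcont.mono huIcc.subset).intervalIntegrable
      · intro y hy
        exact div_le_div_of_nonneg_left (hbpos y hy).le (hμpos y hy)
          (hub ⟨y, hy, rfl⟩)
    calc 1 / μmax = (∫ y in (0:ℝ)..1, b y) / μmax := by rw [hbint]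
      _ = ∫ y in (0:ℝ)..1, b y / μmax := (intervalIntegral.integral_div _ _).symm
      _ ≤ _ := h1
  have hSbdd : BddBelow S := ⟨1 / μmax, hlb⟩
  have hSne : S.Nonempty := by
    refine ⟨∫ y in (0:ℝ)..1, 1 / μ y, fun _ => 1, continuousOn_const,
      fun y _ => one_pos, by simp, rfl⟩
  refine le_antisymm ?_ (le_csInf hSne hlb)
  -- upper bound
  refine le_of_forall_pos_le_add fun ε' hε' => ?_
  set ε : ℝ := min (μmax / 2) (ε' * μmax ^ 2 / 4) with hεdef
  have hε : 0 < ε := lt_min (by positivity) (by positivity)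
  set q : ℝ := μmax - ε with hqdef
  have hq2 : μmax / 2 ≤ q := by
    have := min_le_left (μmax / 2) (ε' * μmax ^ 2 / 4)
    simp only [hqdef]; linarith
  have hq : 0 < q := lt_of_lt_of_le (by positivity) hq2
  have h1q : 1 / q ≤ 1 / μmax + ε' / 2 := by
    rw [div_add_div _ _ (ne_of_gt hμmax_pos) two_ne_zero, div_le_div_iff₀ hq (by positivity)]
    have h1 : ε ≤ ε' * μmax ^ 2 / 4 := min_le_right _ _
    have h2 : μmax / 2 ≤ μmax - ε := hq2
    nlinarith [hμmax_pos, hε]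
  -- continuity at the maximizer y₀
  have hcw : ContinuousWithinAt μ (Set.Icc 0 1) y₀ := hμcont y₀ hy₀
  obtain ⟨δ, hδpos, hδ⟩ := Metric.continuousWithinAt_iff.mp hcw (ε / 2) (by positivity)
  set ℓ : ℝ := min (δ / 2) 1 with hℓdef
  have hℓpos : 0 < ℓ := lt_min (by positivity) one_pos
  have hℓ1 : ℓ ≤ 1 := min_le_right _ _
  set a : ℝ := min y₀ (1 - ℓ) with hadef
  have ha0 : 0 ≤ a := le_min hy₀.1 (by linarith)
  have haℓ : a + ℓ ≤ 1 := by
    have : a ≤ 1 - ℓ := min_le_right _ _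
    linarith
  have hnear : ∀ y ∈ Set.Icc a (a + ℓ), |y - y₀| < δ := by
    intro y hy
    have hyd : |y - y₀| ≤ ℓ := by
      rcases le_or_gt y₀ (1 - ℓ) with h | h
      · have haeq : a = y₀ := min_eq_left h
        rw [abs_sub_le_iff]
        constructor <;> [skip; skip] <;>
          · have := hy.1; have := hy.2; rw [haeq] at *; linarith
      · have haeq : a = 1 - ℓ := min_eq_right h.le
        rw [abs_sub_le_iff]
        have hy1 : y ≤ 1 := by have := hy.2; rw [haeq] at this; linarith
        have hy2 : 1 - ℓ ≤ y := by have := hy.1; rw [haeq] at this; linarith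
        have := hy₀.2
        constructor <;> linarith
    have : ℓ ≤ δ / 2 := min_le_left _ _
    linarith
  set c₁ : ℝ := μmax - ε / 2 with hc₁def
  have hc₁pos : 0 < c₁ := by have : 0 < q := hq; simp only [hc₁def]; linarith [hε]
  have hqc₁ : q < c₁ := by simp only [hqdef, hc₁def]; linarith
  have hIccsub : Set.Icc a (a + ℓ) ⊆ Set.Icc 0 1 := Set.Icc_subset_Icc ha0 haℓ
  have hμbig : ∀ y ∈ Set.Icc a (a + ℓ), c₁ ≤ μ y := by
    intro y hy
    have hyI : y ∈ Set.Icc (0:ℝ) 1 := hIccsub hy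
    have := hδ hyI (by rw [Real.dist_eq]; exact hnear y hy)
    rw [hy₀eq, Real.dist_eq, abs_sub_lt_iff] at this
    simp only [hc₁def]; linarith [this.2]
  -- lower bound on ∫ μ^n
  have hCn_lb : ∀ n : ℕ, ℓ * c₁ ^ n ≤ ∫ y in (0:ℝ)..1, μ y ^ n := by
    intro n
    have h1 : (∫ y in a..(a + ℓ), c₁ ^ n) ≤ ∫ y in a..(a + ℓ), μ y ^ n := by
      apply integral_mono_on (by linarith)
      · exact intervalIntegrable_const
      · exact (hintμpow n).mono_set (by rw [huIcc, Set.uIcc_of_le (by linarith)]; exact hIccsub)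
      · intro y hy
        exact pow_le_pow_left₀ hc₁pos.le (hμbig y hy) n
    have h2 : (∫ y in a..(a + ℓ), μ y ^ n) ≤ ∫ y in (0:ℝ)..1, μ y ^ n := by
      apply integral_mono_interval ha0 (by linarith) haℓ
      · filter_upwards [ae_restrict_mem measurableSet_Ioc] with y hy
        exact pow_nonneg (hμpos y (Set.Ioc_subset_Icc_self hy)).le n
      · exact hintμpow n
    calc ℓ * c₁ ^ n = ∫ y in a..(a + ℓ), c₁ ^ n := by
          rw [intervalIntegral.integral_const, smul_eq_mul]; ring
      _ ≤ _ := h1.trans h2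
  have hCpos : ∀ n : ℕ, 0 < ∫ y in (0:ℝ)..1, μ y ^ n := fun n =>
    lt_of_lt_of_le (by positivity) (hCn_lb n)
  -- pointwise bound μ^n ≤ μ^(n+1)/q + q^n
  have hpt : ∀ n : ℕ, ∀ y ∈ Set.Icc (0:ℝ) 1, μ y ^ n ≤ μ y ^ (n + 1) / q + q ^ n := by
    intro n y hy
    have hμy : 0 < μ y := hμpos y hy
    rcases le_or_gt (μ y) q with h | h
    · have h1 : μ y ^ n ≤ q ^ n := pow_le_pow_left₀ hμy.le h n
      have h2 : 0 ≤ μ y ^ (n + 1) / q := by positivity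
      linarith
    · have h1 : μ y ^ n = μ y ^ (n + 1) / μ y := by
        rw [pow_succ, mul_div_assoc, div_self hμy.ne', mul_one]
      have h2 : μ y ^ (n + 1) / μ y ≤ μ y ^ (n + 1) / q :=
        div_le_div_of_nonneg_left (by positivity) hq h.le
      have h3 : 0 ≤ q ^ n := by positivity
      linarith
  have hCn_ub : ∀ n : ℕ,
      (∫ y in (0:ℝ)..1, μ y ^ n) ≤ (∫ y in (0:ℝ)..1, μ y ^ (n + 1)) / q + q ^ n := by
    intro n
    have h1 : (∫ y in (0:ℝ)..1, μ y ^ n)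
        ≤ ∫ y in (0:ℝ)..1, (μ y ^ (n + 1) / q + q ^ n) := by
      apply integral_mono_on zero_le_one (hintμpow n)
      · exact ((hintμpow (n + 1)).div_const q).add intervalIntegrable_const
      · exact hpt n
    have h2 : (∫ y in (0:ℝ)..1, (μ y ^ (n + 1) / q + q ^ n))
        = (∫ y in (0:ℝ)..1, μ y ^ (n + 1)) / q + q ^ n := by
      rw [intervalIntegral.integral_add ((hintμpow (n + 1)).div_const q)
        intervalIntegrable_const, intervalIntegral.integral_div,
        intervalIntegral.integral_const]
      simp
    linarith
  -- choose n
  obtain ⟨n, hn⟩ := exists_pow_lt_of_lt_one (show (0:ℝ) < ε' / 2 * (ℓ * c₁) by positivity)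
    (show q / c₁ < 1 by rw [div_lt_one hc₁pos]; exact hqc₁)
  -- the density b = μ^(n+1) / C
  set C : ℝ := ∫ y in (0:ℝ)..1, μ y ^ (n + 1) with hCdef
  have hCpos' : 0 < C := hCpos (n + 1)
  have hmem : (∫ y in (0:ℝ)..1, μ y ^ n) / C ∈ S := by
    have heq : Set.EqOn (fun y => μ y ^ (n + 1) / C / μ y) (fun y => μ y ^ n / C)
        (Set.uIcc (0:ℝ) 1) := by
      intro y hy
      rw [huIcc] at hy
      have hμy := (hμpos y hy).ne'
      simp only
      field_simp
      rw [pow_succ]; ring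
    refine ⟨fun y => μ y ^ (n + 1) / C, (hμcont.pow _).div_const _,
      fun y hy => div_pos (pow_pos (hμpos y hy) _) hCpos', ?_, ?_⟩
    · rw [intervalIntegral.integral_div, hCdef, div_self hCpos'.ne']
    · rw [intervalIntegral.integral_congr heq, intervalIntegral.integral_div]
  -- conclude
  have hfinal : (∫ y in (0:ℝ)..1, μ y ^ n) / C ≤ 1 / μmax + ε' := by
    have h1 : (∫ y in (0:ℝ)..1, μ y ^ n) / C ≤ 1 / q + q ^ n / C := by
      rw [div_add_div _ _ hq.ne' hCpos'.ne', div_le_div_iff₀ hCpos' (by positivity)]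
      have := hCn_ub n
      calc (∫ y in (0:ℝ)..1, μ y ^ n) * (q * C) = ((∫ y in (0:ℝ)..1, μ y ^ n)) * q * C := by
            ring
        _ ≤ (C / q + q ^ n) * q * C := by
            apply mul_le_mul_of_nonneg_right (mul_le_mul_of_nonneg_right (hCn_ub n) hq.le)
              hCpos'.le
        _ = (C + q ^ n * q) * C := by field_simp
        _ = (1 * C + q * q ^ n) * C := by ring
    have h2 : q ^ n / C ≤ ε' / 2 := by
      have hl : ℓ * c₁ ^ (n + 1) ≤ C := hCn_lb (n + 1)
      have h3 : q ^ n / C ≤ q ^ n / (ℓ * c₁ ^ (n + 1)) :=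
        div_le_div_of_nonneg_left (by positivity) (by positivity) hl
      have h4 : q ^ n / (ℓ * c₁ ^ (n + 1)) ≤ ε' / 2 := by
        rw [div_le_iff₀ (by positivity)]
        have h6 : q ^ n ≤ c₁ ^ n * (ε' / 2 * (ℓ * c₁)) := by
          have := hn.le
          rw [div_pow] at this
          calc q ^ n = (q / c₁) ^ n * c₁ ^ n := by rw [div_pow]; field_simp
            _ ≤ (ε' / 2 * (ℓ * c₁)) * c₁ ^ n :=
              mul_le_mul_of_nonneg_right (by rw [div_pow]; linarith) (by positivity)
            _ = c₁ ^ n * (ε' / 2 * (ℓ * c₁)) := by ring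
        calc q ^ n ≤ c₁ ^ n * (ε' / 2 * (ℓ * c₁)) := h6
          _ = ε' / 2 * (ℓ * c₁ ^ (n + 1)) := by rw [pow_succ]; ring
      linarith
    calc (∫ y in (0:ℝ)..1, μ y ^ n) / C ≤ 1 / q + q ^ n / C := h1
      _ ≤ (1 / μmax + ε' / 2) + ε' / 2 := add_le_add h1q h2
      _ = 1 / μmax + ε' := by ring
  exact (csInf_le hSbdd hmem).trans hfinal
end

section
/- (Upper bound of the cell formula by the effective dual sum.) Let μ : ℝ → ℝ be continuous, 1-periodic, with 0 < m ≤ μ(y) for all y, and set μ̄ := ∫₀¹ μ(y) dy. Let v ≠ 0 and ξ ∈ ℝ. Then there exists a continuously differentiable z : [0,1] → ℝ with z(1) = z(0) + sign(v) such that ∫₀¹ [ μ(z(s)) (v z′(s))² / 2 + ξ² / (2 μ(z(s))) ] ds = μ̄ v²/2 + ξ²/(2 μ̄). In particular, the infimum M₀(v,ξ) of this integral over all such z satisfies M₀(v,ξ) ≤ R_eff(v) + R_eff*(ξ), where R_eff(v) = μ̄ v²/2 and R_eff*(ξ) = ξ²/(2μ̄). -/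
open MeasureTheory intervalIntegral

/-- **Upper bound of the cell formula by the effective dual sum.**
For `μ` continuous, 1-periodic and bounded below by `m > 0`, with mean `μ̄ = ∫₀¹ μ`,
`v ≠ 0` and `ξ ∈ ℝ`, there is a `C¹` curve `z : [0,1] → ℝ` with `z(1) = z(0) + sign v`
whose cell integral equals `μ̄ v²/2 + ξ²/(2μ̄)`; in particular the infimum `M₀(v,ξ)` of
the cell integrals satisfies `M₀(v,ξ) ≤ R_eff(v) + R_eff*(ξ)` with
`R_eff(v) = μ̄ v²/2` and `R_eff*(ξ) = ξ²/(2μ̄)`. -/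
theorem statement14 (μ : ℝ → ℝ) (hμcont : Continuous μ) (hμper : ∀ y, μ (y + 1) = μ y)
    (m : ℝ) (hm : 0 < m) (hμlb : ∀ y, m ≤ μ y)
    (v ξ : ℝ) (hv : v ≠ 0) :
    (∃ z : ℝ → ℝ, ContDiffOn ℝ 1 z (Set.Icc 0 1) ∧ z 1 = z 0 + Real.sign v ∧
      (∫ s in (0:ℝ)..1,
          (μ (z s) * (v * derivWithin z (Set.Icc 0 1) s) ^ 2 / 2 + ξ ^ 2 / (2 * μ (z s))))
        = (∫ y in (0:ℝ)..1, μ y) * v ^ 2 / 2 + ξ ^ 2 / (2 * ∫ y in (0:ℝ)..1, μ y)) ∧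
    sInf {r : ℝ | ∃ z : ℝ → ℝ, ContDiffOn ℝ 1 z (Set.Icc 0 1) ∧ z 1 = z 0 + Real.sign v ∧
        r = ∫ s in (0:ℝ)..1,
          (μ (z s) * (v * derivWithin z (Set.Icc 0 1) s) ^ 2 / 2 + ξ ^ 2 / (2 * μ (z s)))}
      ≤ (∫ y in (0:ℝ)..1, μ y) * v ^ 2 / 2 + ξ ^ 2 / (2 * ∫ y in (0:ℝ)..1, μ y) := by
  have hμpos : ∀ y, 0 < μ y := fun y => lt_of_lt_of_le hm (hμlb y)
  have hμne : ∀ y, μ y ≠ 0 := fun y => (hμpos y).ne'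
  set μb : ℝ := ∫ y in (0:ℝ)..1, μ y with hμb
  have hμbpos : 0 < μb := by
    have h1 : (m : ℝ) = ∫ _ in (0:ℝ)..1, m := by simp
    have : (m:ℝ) ≤ μb := by
      rw [h1]
      exact intervalIntegral.integral_mono_on zero_le_one
        intervalIntegrable_const (hμcont.intervalIntegrable 0 1) (fun x _ => hμlb x)
    linarith
  have hμbne : μb ≠ 0 := hμbpos.ne'
  set σ : ℝ := Real.sign v with hσdef
  have hσ : σ = 1 ∨ σ = -1 := by
    rcases lt_or_gt_of_ne hv with h | h
    · right; simp [hσdef, Real.sign_of_neg h]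
    · left; simp [hσdef, Real.sign_of_pos h]
  have hσsq : σ ^ 2 = 1 := by rcases hσ with h | h <;> rw [h] <;> ring
  have hσne : σ ≠ 0 := by rcases hσ with h | h <;> rw [h] <;> norm_num
  -- the primitive G
  set G : ℝ → ℝ := fun y => (∫ t in (0:ℝ)..y, μ t) / μb with hGdef
  have hG : ∀ y, HasDerivAt G (μ y / μb) y := by
    intro y
    exact (intervalIntegral.integral_hasDerivAt_right (hμcont.intervalIntegrable 0 y)
      (hμcont.stronglyMeasurableAtFilter _ _) hμcont.continuousAt).div_const μb
  have hGmono : StrictMono G :=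
    strictMono_of_hasDerivAt_pos hG (fun y => div_pos (hμpos y) hμbpos)
  have hGcont : Continuous G :=
    continuous_iff_continuousAt.mpr fun y => (hG y).continuousAt
  -- bounds giving surjectivity
  have hGlb : ∀ y, 0 ≤ y → m * y / μb ≤ G y := by
    intro y hy
    have : ∫ _ in (0:ℝ)..y, m ≤ ∫ t in (0:ℝ)..y, μ t :=
      intervalIntegral.integral_mono_on hy intervalIntegrable_const
        (hμcont.intervalIntegrable 0 y) (fun x _ => hμlb x)
    simp only [intervalIntegral.integral_const, smul_eq_mul] at this
    simp only [hGdef]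
    rw [div_le_div_iff_of_pos_right hμbpos] at *
    nlinarith
  have hGub : ∀ y, y ≤ 0 → G y ≤ m * y / μb := by
    intro y hy
    have h1 : ∫ t in (0:ℝ)..y, μ t = -∫ t in y..(0:ℝ), μ t := by
      rw [intervalIntegral.integral_symm]
    have : ∫ _ in y..(0:ℝ), m ≤ ∫ t in y..(0:ℝ), μ t :=
      intervalIntegral.integral_mono_on hy intervalIntegrable_const
        (hμcont.intervalIntegrable y 0) (fun x _ => hμlb x)
    simp only [intervalIntegral.integral_const, smul_eq_mul] at this
    simp only [hGdef, h1]
    rw [div_le_div_iff_of_pos_right hμbpos]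
    nlinarith
  have hbound_top : Filter.Tendsto (fun y : ℝ => m * y / μb) Filter.atTop Filter.atTop :=
    (Filter.Tendsto.const_mul_atTop hm Filter.tendsto_id).atTop_div_const hμbpos
  have hbound_bot : Filter.Tendsto (fun y : ℝ => m * y / μb) Filter.atBot Filter.atBot :=
    (Filter.Tendsto.const_mul_atBot hm Filter.tendsto_id).atBot_div_const hμbpos
  have hGtop : Filter.Tendsto G Filter.atTop Filter.atTop := by
    apply Filter.tendsto_atTop_mono' Filter.atTop _ hbound_top
    filter_upwards [Filter.eventually_ge_atTop (0:ℝ)] with y hy using hGlb y hy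
  have hGbot : Filter.Tendsto G Filter.atBot Filter.atBot := by
    apply Filter.tendsto_atBot_mono' Filter.atBot _ hbound_bot
    filter_upwards [Filter.eventually_le_atBot (0:ℝ)] with y hy using hGub y hy
  have hGsurj : Function.Surjective G := hGcont.surjective hGtop hGbot
  -- the order iso and its inverse g
  set e : ℝ ≃o ℝ := StrictMono.orderIsoOfSurjective G hGmono hGsurj with hedef
  set g : ℝ → ℝ := fun x => e.symm x with hgdef
  have hGg : ∀ x, G (g x) = x := fun x => e.apply_symm_apply x
  have hgcont : Continuous g := (OrderIso.toHomeomorph e.symm).continuous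
  have hgderiv : ∀ x, HasDerivAt g (μb / μ (g x)) x := by
    intro x
    have h := HasDerivAt.of_local_left_inverse (hgcont.continuousAt)
      (hG (g x)) (div_ne_zero (hμne _) hμbne)
      (Filter.Eventually.of_forall hGg)
    simpa [one_div, div_div_eq_mul_div, inv_div] using h
  -- the curve z
  set z : ℝ → ℝ := fun s => g (σ * s) with hzdef
  have hzderiv : ∀ s, HasDerivAt z (σ * μb / μ (z s)) s := by
    intro s
    have h1 : HasDerivAt (fun s : ℝ => σ * s) σ s := by
      simpa using (hasDerivAt_id s).const_mul σ
    have h2 : HasDerivAt z (μb / μ (g (σ * s)) * σ) s := (hgderiv (σ * s)).comp s h1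
    have h3 : μb / μ (g (σ * s)) * σ = σ * μb / μ (z s) := by
      rw [hzdef]; ring
    rwa [h3] at h2
  have hzcont : Continuous z := hgcont.comp (continuous_const.mul continuous_id)
  have hzderiv' : deriv z = fun s => σ * μb / μ (z s) := funext fun s => (hzderiv s).deriv
  have hzC1 : ContDiff ℝ 1 z := by
    rw [contDiff_one_iff_deriv]
    refine ⟨fun s => (hzderiv s).differentiableAt, ?_⟩
    rw [hzderiv']
    exact continuous_const.div (hμcont.comp hzcont) (fun s => hμne _)
  have hzC1On : ContDiffOn ℝ 1 z (Set.Icc 0 1) := hzC1.contDiffOn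
  have hdW : ∀ s ∈ Set.Icc (0:ℝ) 1, derivWithin z (Set.Icc 0 1) s = σ * μb / μ (z s) := by
    intro s hs
    rw [DifferentiableAt.derivWithin (hzderiv s).differentiableAt
      ((uniqueDiffOn_Icc zero_lt_one) s hs), (hzderiv s).deriv]
  -- endpoint values
  have hg0 : g 0 = 0 := by
    have : G 0 = 0 := by simp [hGdef]
    have := hGmono.injective (by rw [hGg 0, this] : G (g 0) = G 0)
    exact this
  have hGσ : G σ = σ := by
    rcases hσ with h | h
    · rw [h]; simp [hGdef, ← hμb, div_self hμbne]
    · rw [h]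
      have hper : Function.Periodic μ 1 := hμper
      have h2 : ∫ t in (-1:ℝ)..0, μ t = μb := by
        have := hper.intervalIntegral_add_eq (-1) 0
        simpa using this
      have h3 : ∫ t in (0:ℝ)..(-1:ℝ), μ t = -μb := by
        rw [intervalIntegral.integral_symm, h2]
      simp [hGdef, h3, hμbne]
  have hz1 : z 1 = z 0 + σ := by
    have hgσ : g σ = σ := hGmono.injective (by rw [hGg σ, hGσ])
    simp [hzdef, hg0, hgσ]
  -- the integral computation
  have hkey : ∀ s ∈ Set.Icc (0:ℝ) 1,
      μ (z s) * (v * derivWithin z (Set.Icc 0 1) s) ^ 2 / 2 + ξ ^ 2 / (2 * μ (z s))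
      = ((v ^ 2 * μb ^ 2 + ξ ^ 2) / (2 * σ * μb)) * deriv z s := by
    intro s hs
    rw [hdW s hs, hzderiv']
    have ha := hμne (z s)
    rcases hσ with h | h <;> rw [h] <;> field_simp <;> ring
  have hderivInt : IntervalIntegrable (deriv z) volume 0 1 := by
    rw [hzderiv']
    exact (continuous_const.div (hμcont.comp hzcont) (fun s => hμne _)).intervalIntegrable 0 1
  have hFTC : ∫ s in (0:ℝ)..1, deriv z s = σ := by
    rw [intervalIntegral.integral_deriv_eq_sub (fun x _ => (hzderiv x).differentiableAt) hderivInt,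
      hz1]
    ring
  have hint : (∫ s in (0:ℝ)..1,
      (μ (z s) * (v * derivWithin z (Set.Icc 0 1) s) ^ 2 / 2 + ξ ^ 2 / (2 * μ (z s))))
      = μb * v ^ 2 / 2 + ξ ^ 2 / (2 * μb) := by
    rw [intervalIntegral.integral_congr (g := fun s => ((v ^ 2 * μb ^ 2 + ξ ^ 2) / (2 * σ * μb)) * deriv z s)
      (by intro s hs; exact hkey s (by simpa [Set.uIcc_of_le (zero_le_one' ℝ)] using hs)),
      intervalIntegral.integral_const_mul, hFTC]
    rcases hσ with h | h <;> rw [h] <;> field_simp <;> ring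
  refine ⟨⟨z, hzC1On, by rw [hz1], hint⟩, ?_⟩
  apply csInf_le
  · refine ⟨0, ?_⟩
    rintro r ⟨w, hwC1, hw1, rfl⟩
    apply intervalIntegral.integral_nonneg zero_le_one
    intro s _
    have h1 := hμpos (w s)
    positivity
  · exact ⟨z, hzC1On, by rw [hz1], hint.symm⟩
end

section
/- (Gradient-flow solutions solve a Hamiltonian system.) Let G be a symmetric positive-definite real n×n matrix, let E : ℝⁿ → ℝ be twice continuously differentiable, and let q : I → ℝⁿ be a differentiable curve on an open interval I satisfying the gradient-flow equation G q̇(t) = −∇E(q(t)) for all t ∈ I. Then q is twice differentiable on I and satisfies the second-order (Hamiltonian / Euler–Lagrange) equation G q̈(t) = D²E(q(t)) G⁻¹ ∇E(q(t)) for all t ∈ I, where D²E denotes the Hessian of E. -/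
/-!
Since `G` is invertible, the flow equation says `q̇ = -G⁻¹ ∇E(q)` on the open interval, and the
right-hand side is `C¹` in `q`. The chain rule then differentiates `q̇` once more:
`q̈ = -G⁻¹ D²E(q) q̇ = G⁻¹ D²E(q) G⁻¹ ∇E(q)`.
-/

open scoped Topology

theorem ContDiff.gradient {F : Type*} [NormedAddCommGroup F] [InnerProductSpace ℝ F]
    [CompleteSpace F] {f : F → ℝ} {m : WithTop ℕ∞} (hf : ContDiff ℝ (m + 1) f) :
    ContDiff ℝ m (gradient f) :=
  (InnerProductSpace.toDual ℝ F).symm.contDiff.comp (hf.fderiv_right le_rfl)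

theorem HasDerivAt.hasDerivAt_velocity_of_eventually_eq {𝕜 E F : Type*}
    [NontriviallyNormedField 𝕜] [NormedAddCommGroup E] [NormedSpace 𝕜 E]
    [NormedAddCommGroup F] [NormedSpace 𝕜 F]
    (L : E ≃L[𝕜] F) {V : E → F} {q q' : 𝕜 → E} {t : 𝕜}
    (hq : HasDerivAt q (q' t) t) (hV : DifferentiableAt 𝕜 V (q t))
    (hflow : ∀ᶠ s in 𝓝 t, L (q' s) = V (q s)) :
    HasDerivAt q' (L.symm (fderiv 𝕜 V (q t) (q' t))) t := by
  have hq' : q' =ᶠ[𝓝 t] fun s ↦ L.symm (V (q s)) :=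
    hflow.mono fun s hs ↦ L.eq_symm_apply.2 hs
  exact ((L.symm : F →L[𝕜] E).hasFDerivAt.comp_hasDerivAt t
    (hV.hasFDerivAt.comp_hasDerivAt t hq)).congr_of_eventuallyEq hq'

namespace Matrix

variable {ι : Type*} [Fintype ι] [DecidableEq ι]

noncomputable def toEuclideanCLE (G : Matrix ι ι ℝ) (hG : IsUnit G.det) :
    EuclideanSpace ℝ ι ≃L[ℝ] EuclideanSpace ℝ ι :=
  .equivOfInverse' (toEuclideanCLM (𝕜 := ℝ) G) (toEuclideanCLM (𝕜 := ℝ) G⁻¹)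
    (by rw [← ContinuousLinearMap.mul_def, ← map_mul, mul_nonsing_inv G hG, map_one]; rfl)
    (by rw [← ContinuousLinearMap.mul_def, ← map_mul, nonsing_inv_mul G hG, map_one]; rfl)

end Matrix

/-- **Gradient-flow solutions solve a Hamiltonian system.**
Let `G` be a symmetric positive-definite real `n×n` matrix, `E : ℝⁿ → ℝ` be `C²`, and
let `q` be differentiable on an open interval `I` with `G q̇ = -∇E(q)` on `I`. Then `q`
is twice differentiable on `I` and `G q̈ = D²E(q) G⁻¹ ∇E(q)` on `I`, where the Hessian
`D²E(x)` is realized as the derivative of the gradient map, `fderiv ℝ (gradient E) x`. -/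
theorem statement16 {n : ℕ} (G : Matrix (Fin n) (Fin n) ℝ) (hG : G.PosDef)
    (E : EuclideanSpace ℝ (Fin n) → ℝ) (hE : ContDiff ℝ 2 E)
    (a b : ℝ) (q q' : ℝ → EuclideanSpace ℝ (Fin n))
    (hq : ∀ t ∈ Set.Ioo a b, HasDerivAt q (q' t) t)
    (hflow : ∀ t ∈ Set.Ioo a b,
      Matrix.toEuclideanLin G (q' t) = -gradient E (q t)) :
    ∃ q'' : ℝ → EuclideanSpace ℝ (Fin n),
      (∀ t ∈ Set.Ioo a b, HasDerivAt q' (q'' t) t) ∧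
      ∀ t ∈ Set.Ioo a b,
        Matrix.toEuclideanLin G (q'' t) =
          fderiv ℝ (gradient E) (q t)
            (Matrix.toEuclideanLin G⁻¹ (gradient E (q t))) := by
  let L := G.toEuclideanCLE ((Matrix.isUnit_iff_isUnit_det G).1 hG.isUnit)
  have hflowL : ∀ t ∈ Set.Ioo a b, L (q' t) = -gradient E (q t) := hflow
  have hgrad : Differentiable ℝ (-gradient E) :=
    ((hE.gradient (m := 1)).differentiable one_ne_zero).neg
  refine ⟨fun t ↦ L.symm (fderiv ℝ (-gradient E) (q t) (q' t)),
    fun t ht ↦ ?_, fun t ht ↦ ?_⟩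
  · exact (hq t ht).hasDerivAt_velocity_of_eventually_eq L (hgrad _)
      (Filter.eventually_of_mem (Ioo_mem_nhds ht.1 ht.2) hflowL)
  · have hq' : q' t = -L.symm (gradient E (q t)) := by
      rw [← map_neg, L.eq_symm_apply]
      exact hflowL t ht
    show L _ = fderiv ℝ (gradient E) (q t) (L.symm (gradient E (q t)))
    rw [L.apply_symm_apply, hq', fderiv_neg, neg_apply, map_neg, neg_neg]
end
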